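/- arXiv:2212.09455 — 13 statements merged into one kernel-verified Lean document; each statement's English description precedes it below -/
import Mathlib

section
/- The Apéry numbers A_n = ∑_{k=0}^{n} C(n,k)^2 C(n+k,k)^2 satisfy the recurrence (n+1)^3 A_n - (2n+3)(17n^2+51n+39) A_{n+1} + (n+2)^3 A_{n+2} = 0 for all natural numbers n. -/
def apery (n : ℕ) : ℤ :=
  ∑ k ∈ Finset.range (n+1), (n.choose k : ℤ)^2 * ((n+k).choose k : ℤ)^2

/-- The WZ certificate function. -/
def wzG (n k : ℕ) : ℤ :=
  4*(k:ℤ)^4*(2*(n:ℤ)+3)*(2*(k:ℤ)^2-3*(k:ℤ)-4*((n:ℤ)+1)*((n:ℤ)+2)) *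
    ((n+2).choose k : ℤ)^2 * ((n+k).choose k : ℤ)^2

lemma alg (x k a b1 b2 c c1 c2 b' c' : ℚ)
    (h1 : x+1 ≠ 0) (h2 : x+2 ≠ 0) (h3 : k+1 ≠ 0)
    (r1 : (x+1-k) * b1 = (x+1) * a)
    (r2 : (x+2-k) * b2 = (x+2) * b1)
    (r3 : (x+1) * c1 = (x+k+1) * c)
    (r4 : (x+2) * c2 = (x+k+2) * c1)
    (r5 : (k+1) * b' = (x+2-k) * b2)
    (r6 : (k+1) * c' = (x+1) * c1) :
    (x+1)^2*(x+2)^2 *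
      ( (x+1)^3 * (a^2*c^2)
        - (2*x+3)*(17*x^2+51*x+39) * (b1^2*c1^2)
        + (x+2)^3 * (b2^2*c2^2) )
    = 4*(k+1)^4*(2*x+3)*(2*(k+1)^2-3*(k+1)-4*(x+1)*(x+2)) * b'^2 * c'^2
      - 4*k^4*(2*x+3)*(2*k^2-3*k-4*(x+1)*(x+2)) * b2^2 * c^2 := by
  have ea : a = (x+1-k)*b1/(x+1) := by field_simp; linear_combination -r1
  have ec2 : c2 = (x+k+2)*c1/(x+2) := by field_simp; linear_combination r4
  have eb' : b' = (x+2-k)*b2/(k+1) := by field_simp; linear_combination r5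
  have ec' : c' = (x+1)*c1/(k+1) := by field_simp; linear_combination r6
  have eb1 : b1 = (x+2-k)*b2/(x+2) := by field_simp; linear_combination -r2
  have ec1 : c1 = (x+k+1)*c/(x+1) := by field_simp; linear_combination r3
  subst ea ec2 eb' ec' eb1 ec1
  field_simp
  ring

lemma castq (n : ℕ) : ((n:ℤ):ℚ) = (n:ℚ) := by push_cast; ring

lemma q1 (n k : ℕ) :
    ((n:ℚ)+1-k) * ((n+1).choose k : ℚ) = ((n:ℚ)+1) * (n.choose k : ℚ) := by
  rcases le_or_gt k (n+1) with h | h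
  · have h2 := Nat.choose_mul_succ_eq n k
    qify [h] at h2
    linear_combination -h2
  · rw [Nat.choose_eq_zero_of_lt h, Nat.choose_eq_zero_of_lt (by omega)]
    simp

lemma q2 (n k : ℕ) :
    ((n:ℚ)+2-k) * ((n+2).choose k : ℚ) = ((n:ℚ)+2) * ((n+1).choose k : ℚ) := by
  rcases le_or_gt k (n+2) with h | h
  · have h2 := Nat.choose_mul_succ_eq (n+1) k
    rw [show n+1+1 = n+2 by omega] at h2
    qify [h] at h2
    linear_combination -h2
  · rw [Nat.choose_eq_zero_of_lt h, Nat.choose_eq_zero_of_lt (by omega)]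
    simp

lemma q3 (n k : ℕ) :
    ((n:ℚ)+1) * ((n+k+1).choose k : ℚ) = ((n:ℚ)+(k:ℚ)+1) * ((n+k).choose k : ℚ) := by
  have h2 := Nat.choose_mul_succ_eq (n+k) k
  qify [show k ≤ n+k+1 by omega] at h2
  linear_combination -h2

lemma q4 (n k : ℕ) :
    ((n:ℚ)+2) * ((n+k+2).choose k : ℚ) = ((n:ℚ)+(k:ℚ)+2) * ((n+k+1).choose k : ℚ) := by
  have h2 := Nat.choose_mul_succ_eq (n+k+1) k
  rw [show n+k+1+1 = n+k+2 by omega] at h2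
  qify [show k ≤ n+k+2 by omega] at h2
  linear_combination -h2

lemma q5 (n k : ℕ) :
    ((k:ℚ)+1) * ((n+2).choose (k+1) : ℚ) = ((n:ℚ)+2-k) * ((n+2).choose k : ℚ) := by
  rcases le_or_gt k (n+2) with h | h
  · have h2 := Nat.choose_succ_right_eq (n+2) k
    qify [h] at h2
    linear_combination h2
  · rw [Nat.choose_eq_zero_of_lt (by omega), Nat.choose_eq_zero_of_lt (by omega)]
    simp

lemma q6 (n k : ℕ) :
    ((k:ℚ)+1) * ((n+k+1).choose (k+1) : ℚ) = ((n:ℚ)+1) * ((n+k+1).choose k : ℚ) := by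
  have h2 := Nat.choose_succ_right_eq (n+k+1) k
  qify [show k ≤ n+k+1 by omega] at h2
  have h3 : ((n:ℚ)+(k:ℚ)+1)-(k:ℚ) = (n:ℚ)+1 := by ring
  linear_combination h2

lemma key (n k : ℕ) :
    ((n:ℤ)+1)^2*((n:ℤ)+2)^2 *
      ( ((n:ℤ)+1)^3 * ((n.choose k : ℤ)^2 * ((n+k).choose k : ℤ)^2)
        - (2*(n:ℤ)+3)*(17*(n:ℤ)^2+51*(n:ℤ)+39) *
            (((n+1).choose k : ℤ)^2 * ((n+k+1).choose k : ℤ)^2)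
        + ((n:ℤ)+2)^3 * (((n+2).choose k : ℤ)^2 * ((n+k+2).choose k : ℤ)^2) )
    = wzG n (k+1) - wzG n k := by
  have h1 : ((n:ℚ)+1) ≠ 0 := by positivity
  have h2 : ((n:ℚ)+2) ≠ 0 := by positivity
  have h3 : ((k:ℚ)+1) ≠ 0 := by positivity
  have h := alg (n:ℚ) (k:ℚ) (n.choose k : ℚ) ((n+1).choose k : ℚ) ((n+2).choose k : ℚ)
      ((n+k).choose k : ℚ) ((n+k+1).choose k : ℚ) ((n+k+2).choose k : ℚ)
      ((n+2).choose (k+1) : ℚ) ((n+k+1).choose (k+1) : ℚ)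
      h1 h2 h3 (q1 n k) (q2 n k) (q3 n k) (q4 n k) (q5 n k) (q6 n k)
  rw [wzG, wzG, show n+(k+1) = n+k+1 by omega]
  push_cast
  exact_mod_cast h

lemma sum_ext (m N : ℕ) (h : m+1 ≤ N) :
    apery m = ∑ k ∈ Finset.range N, (m.choose k : ℤ)^2 * ((m+k).choose k : ℤ)^2 := by
  rw [apery]
  apply Finset.sum_subset (Finset.range_subset_range.2 h)
  intro x _ hx
  have hx' : m < x := by simpa using hx
  simp [Nat.choose_eq_zero_of_lt hx']

theorem apery_recurrence (n : ℕ) :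
    ((n : ℤ)+1)^3 * apery n - (2*(n : ℤ)+3) * (17*(n : ℤ)^2+51*(n : ℤ)+39) * apery (n+1)
      + ((n : ℤ)+2)^3 * apery (n+2) = 0 := by
  have e0 : apery n = ∑ k ∈ Finset.range (n+3), (n.choose k : ℤ)^2 * ((n+k).choose k : ℤ)^2 :=
    sum_ext n (n+3) (by omega)
  have e1 : apery (n+1)
      = ∑ k ∈ Finset.range (n+3), ((n+1).choose k : ℤ)^2 * ((n+k+1).choose k : ℤ)^2 := by
    rw [sum_ext (n+1) (n+3) (by omega)]
    exact Finset.sum_congr rfl fun k _ => by rw [show n+1+k = n+k+1 by omega]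
  have e2 : apery (n+2)
      = ∑ k ∈ Finset.range (n+3), ((n+2).choose k : ℤ)^2 * ((n+k+2).choose k : ℤ)^2 := by
    rw [sum_ext (n+2) (n+3) (by omega)]
    exact Finset.sum_congr rfl fun k _ => by rw [show n+2+k = n+k+2 by omega]
  have tele : ∑ k ∈ Finset.range (n+3), (wzG n (k+1) - wzG n k) = 0 := by
    rw [Finset.sum_range_sub (fun k => wzG n k)]
    have hz2 : wzG n (n+3) = 0 := by
      have hc : (n+2).choose (n+3) = 0 := Nat.choose_eq_zero_of_lt (by omega)
      simp [wzG, hc]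
    have hz1 : wzG n 0 = 0 := by simp [wzG]
    rw [hz2, hz1, sub_zero]
  have comb : ((n:ℤ)+1)^2*((n:ℤ)+2)^2 *
      (((n : ℤ)+1)^3 * apery n - (2*(n : ℤ)+3) * (17*(n : ℤ)^2+51*(n : ℤ)+39) * apery (n+1)
        + ((n : ℤ)+2)^3 * apery (n+2))
      = ∑ k ∈ Finset.range (n+3), (wzG n (k+1) - wzG n k) := by
    rw [e0, e1, e2, Finset.mul_sum, Finset.mul_sum, Finset.mul_sum,
      ← Finset.sum_sub_distrib, ← Finset.sum_add_distrib, Finset.mul_sum]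
    exact Finset.sum_congr rfl fun k _ => by linear_combination key n k
  rw [tele] at comb
  have hc : ((n:ℤ)+1)^2*((n:ℤ)+2)^2 ≠ 0 := by positivity
  exact (mul_eq_zero.mp comb).resolve_left hc
end

section
/- For any prime p > 3, the Apéry number A_{p-2} is congruent to 5 - 12p modulo p^3. -/
open Finset

/-- Lucas-type corollary: `C(p+r, r) ≡ 1 (mod p)` for `r < p`. -/
lemma aux_lucas_p_add (p r : ℕ) [Fact p.Prime] (hr : r < p) :
    ((p + r).choose r : ZMod p) = 1 := by
  have h := Choose.choose_modEq_choose_mod_mul_choose_div (p := p) (n := p + r) (k := r)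
  have h1 : (p + r) % p = r := by rw [Nat.add_mod_left]; exact Nat.mod_eq_of_lt hr
  have h2 : (p + r) / p = 1 := by
    rw [Nat.add_div_left _ (Fact.out (p := p.Prime)).pos, Nat.div_eq_of_lt hr]
  have h3 : r % p = r := Nat.mod_eq_of_lt hr
  have h4 : r / p = 0 := Nat.div_eq_of_lt hr
  rw [h1, h2, h3, h4] at h
  have := (ZMod.intCast_eq_intCast_iff _ _ _).mpr h
  push_cast at this
  simpa using this

lemma aux_choose_sub_one_mod (p : ℕ) [Fact p.Prime] :
    ∀ k, k ≤ p - 1 → (((p-1).choose k : ℕ) : ZMod p) = (-1)^k := by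
  have hp := (Fact.out (p := p.Prime))
  intro k
  induction k with
  | zero => simp
  | succ k ih =>
    intro hk
    have hk' : k ≤ p - 1 := by omega
    have hpas : (p-1).choose k + (p-1).choose (k+1) = p.choose (k+1) := by
      have hp1 : p - 1 + 1 = p := by omega
      conv_rhs => rw [← hp1, Nat.choose_succ_succ]
    have hzero : ((p.choose (k+1) : ℕ) : ZMod p) = 0 := by
      rw [ZMod.natCast_eq_zero_iff]
      exact Nat.Prime.dvd_choose_self hp (by omega) (by omega)
    have := ih hk'
    have hcast : (((p-1).choose k : ℕ) : ZMod p) + (((p-1).choose (k+1) : ℕ) : ZMod p) = 0 := by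
      rw [← Nat.cast_add, hpas, hzero]
    rw [this] at hcast
    rw [pow_succ]
    linear_combination hcast

lemma aux_choose_sub_two_mod (p : ℕ) [Fact p.Prime] (hp3 : 3 < p) :
    ∀ k, k ≤ p - 2 → (((p-2).choose k : ℕ) : ZMod p) = (-1)^k * (k+1) := by
  intro k
  induction k with
  | zero => simp
  | succ k ih =>
    intro hk
    have h1 : (p-2).choose k + (p-2).choose (k+1) = (p-1).choose (k+1) := by
      have hp1 : p - 2 + 1 = p - 1 := by omega
      conv_rhs => rw [← hp1, Nat.choose_succ_succ]
    have hcast : (((p-2).choose k : ℕ) : ZMod p) + (((p-2).choose (k+1) : ℕ) : ZMod p)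
        = (-1)^(k+1) := by
      rw [← Nat.cast_add, h1, aux_choose_sub_one_mod p (k+1) (by omega)]
    rw [ih (by omega)] at hcast
    push_cast
    rw [pow_succ] at hcast ⊢
    linear_combination hcast

lemma aux_sum_inv_eq {p : ℕ} [Fact p.Prime] (hp3 : 3 < p) : ∑ a : ZMod p, a⁻¹ = 0 := by
  have : ∑ a : ZMod p, a⁻¹ = ∑ a : ZMod p, a :=
    Equiv.sum_comp (Function.Involutive.toPerm _ (inv_involutive)) (fun a => a)
  rw [this]
  have := FiniteField.sum_pow_lt_card_sub_one (K := ZMod p) 1 (by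
    rw [ZMod.card]; omega)
  simpa using this

lemma aux_sum_inv_sq_eq {p : ℕ} [Fact p.Prime] (hp3 : 3 < p) :
    ∑ a : ZMod p, a⁻¹ * a⁻¹ = 0 := by
  have : ∑ a : ZMod p, a⁻¹ * a⁻¹ = ∑ a : ZMod p, a * a :=
    Equiv.sum_comp (Function.Involutive.toPerm _ (inv_involutive)) (fun a => a * a)
  rw [this]
  have := FiniteField.sum_pow_lt_card_sub_one (K := ZMod p) 2 (by
    rw [ZMod.card]; omega)
  rw [← this]
  exact Finset.sum_congr rfl (fun a _ => (sq a).symm)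

lemma aux_sum_g_eq {p : ℕ} [Fact p.Prime] (hp3 : 3 < p) :
    ∑ a : ZMod p, (a+1)^2 * (((a * (a-1))⁻¹)^2) = -13 := by
  have hchar : (1 : ZMod p) ≠ 0 := one_ne_zero
  set h : ZMod p → ZMod p :=
    fun a => a⁻¹ * a⁻¹ + 4*((a-1)⁻¹*(a-1)⁻¹) - 4*(a-1)⁻¹ + 4*a⁻¹ with hh
  have hsumh : ∑ a : ZMod p, h a = 0 := by
    have e1 : ∑ a : ZMod p, (a-1)⁻¹ * (a-1)⁻¹ = ∑ a : ZMod p, a⁻¹ * a⁻¹ :=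
      Equiv.sum_comp (Equiv.subRight (1 : ZMod p)) (fun a => a⁻¹ * a⁻¹)
    have e2 : ∑ a : ZMod p, (a-1)⁻¹ = ∑ a : ZMod p, a⁻¹ :=
      Equiv.sum_comp (Equiv.subRight (1 : ZMod p)) (fun a => a⁻¹)
    simp only [hh]
    rw [Finset.sum_add_distrib, Finset.sum_sub_distrib, Finset.sum_add_distrib,
      ← Finset.mul_sum, ← Finset.mul_sum, ← Finset.mul_sum, e1, e2,
      aux_sum_inv_eq hp3, aux_sum_inv_sq_eq hp3]
    ring
  set g : ZMod p → ZMod p := fun a => (a+1)^2 * (((a * (a-1))⁻¹)^2) with hg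
  have hdiff : ∑ a : ZMod p, (h a - g a) = 13 := by
    have hsub : ({0, 1} : Finset (ZMod p)) ⊆ Finset.univ := Finset.subset_univ _
    rw [← Finset.sum_subset hsub]
    · have h01 : (0 : ZMod p) ≠ 1 := by
        intro hzo
        exact hchar hzo.symm
      rw [Finset.sum_pair h01]
      have hv0 : h 0 - g 0 = 8 := by
        simp only [hh, hg]
        norm_num
      have hv1 : h 1 - g 1 = 5 := by
        simp only [hh, hg]
        norm_num
      rw [hv0, hv1]; norm_num
    · intro a _ ha
      simp only [Finset.mem_insert, Finset.mem_singleton, not_or] at ha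
      obtain ⟨ha0, ha1⟩ := ha
      have ha1' : a - 1 ≠ 0 := sub_ne_zero.mpr ha1
      simp only [hh, hg]
      have hx : a * a⁻¹ = 1 := mul_inv_cancel₀ ha0
      have hy : (a - 1) * (a - 1)⁻¹ = 1 := mul_inv_cancel₀ ha1'
      rw [mul_inv]
      set x := a⁻¹
      set y := (a-1)⁻¹
      linear_combination (-4*y^2*(1+a*x) + 4*y*(1+a*x) - 4*x*((a-1)*y)^2) * hx
        + (-x^2*(1+(a-1)*y) + 4*y*(a*x)^2 - 4*x*((a-1)*y+1)) * hy
  rw [Finset.sum_sub_distrib, hsumh, zero_sub] at hdiff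
  linear_combination -hdiff

lemma aux_sum_peel (F : ℕ → ℤ) (m : ℕ) (hm : 2 ≤ m) :
    ∑ k ∈ Finset.range (m+1), F k = (∑ i ∈ Finset.range (m-1), F (i+2)) + F 1 + F 0 := by
  obtain ⟨m', rfl⟩ : ∃ m', m = m' + 2 := ⟨m - 2, by omega⟩
  rw [Finset.sum_range_succ' F (m'+2), Finset.sum_range_succ' (fun i => F (i+1)) (m'+1)]
  simp

theorem apery_pred_pred_mod (p : ℕ) (hp : p.Prime) (hp3 : 3 < p) :
    apery (p - 2) ≡ 5 - 12 * (p : ℤ) [ZMOD (p : ℤ)^3] := by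
  haveI : Fact p.Prime := ⟨hp⟩
  have hp5 : 5 ≤ p := by
    have h4 : p ≠ 4 := by rintro rfl; norm_num at hp
    omega
  set n := p - 2 with hn
  -- the function `c i` : `C(n+i+2, i+2) / p`
  set c : ℕ → ℕ := fun i => ((n + (i+2)).choose (i+2)) / p with hc
  -- divisibility and cancellation facts for each i < n - 1
  have hfacts : ∀ i, i < n - 1 →
      p * c i = (n + (i+2)).choose (i+2) ∧
      c i * ((i+2)*(i+1)) = (n + (i+2)).choose i * (p-1) := by
    intro i hi
    have hi' : i + 2 ≤ p - 2 := by omega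
    set m := n + (i+2) with hm
    have hA : m.choose (i+2) * (i+2) = m.choose (i+1) * (m - (i+1)) :=
      Nat.choose_succ_right_eq m (i+1)
    have hB : m.choose (i+1) * (i+1) = m.choose i * (m - i) :=
      Nat.choose_succ_right_eq m i
    have hm1 : m - (i+1) = p - 1 := by omega
    have hm2 : m - i = p := by omega
    rw [hm1] at hA; rw [hm2] at hB
    have hkey : m.choose (i+2) * ((i+2)*(i+1)) = m.choose i * (p * (p-1)) := by
      calc m.choose (i+2) * ((i+2)*(i+1)) = (m.choose (i+2) * (i+2)) * (i+1) := by ring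
        _ = (m.choose (i+1) * (i+1)) * (p-1) := by rw [hA]; ring
        _ = (m.choose i * p) * (p-1) := by rw [hB]
        _ = m.choose i * (p * (p-1)) := by ring
    have hdvd : p ∣ m.choose (i+2) := by
      have h1 : p ∣ m.choose (i+2) * ((i+2)*(i+1)) := by
        rw [hkey]; exact ⟨m.choose i * (p-1), by ring⟩
      have hcop : Nat.Coprime p ((i+2)*(i+1)) := by
        apply Nat.Coprime.mul_right <;>
          rw [Nat.Prime.coprime_iff_not_dvd hp] <;>
          · intro hdv
            have := Nat.le_of_dvd (by omega) hdv
            omega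
      exact (Nat.Coprime.dvd_of_dvd_mul_right hcop h1)
    have hpc : p * c i = m.choose (i+2) := Nat.mul_div_cancel' hdvd
    refine ⟨hpc, ?_⟩
    have : p * (c i * ((i+2)*(i+1))) = p * (m.choose i * (p-1)) := by
      calc p * (c i * ((i+2)*(i+1))) = (p * c i) * ((i+2)*(i+1)) := by ring
        _ = m.choose (i+2) * ((i+2)*(i+1)) := by rw [hpc]
        _ = m.choose i * (p * (p-1)) := hkey
        _ = p * (m.choose i * (p-1)) := by ring
    exact Nat.eq_of_mul_eq_mul_left (by omega) this
  -- split the sum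
  have hsplit : apery n = (∑ i ∈ Finset.range (n-1),
      (n.choose (i+2) : ℤ)^2 * ((n+(i+2)).choose (i+2) : ℤ)^2)
      + (n.choose 1 : ℤ)^2 * ((n+1).choose 1 : ℤ)^2 + 1 := by
    rw [apery, aux_sum_peel _ n (by omega)]
    simp
  set T : ℤ := ∑ i ∈ Finset.range (n-1), (n.choose (i+2) : ℤ)^2 * ((c i : ℕ) : ℤ)^2 with hT
  have hsplit2 : apery n = (p:ℤ)^2 * T
      + (n.choose 1 : ℤ)^2 * ((n+1).choose 1 : ℤ)^2 + 1 := by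
    rw [hsplit, hT, Finset.mul_sum]
    congr 1
    congr 1
    apply Finset.sum_congr rfl
    intro i hi
    rw [Finset.mem_range] at hi
    obtain ⟨hpc, -⟩ := hfacts i hi
    have : ((n + (i+2)).choose (i+2) : ℤ) = (p : ℤ) * (c i : ℤ) := by
      exact_mod_cast congrArg (Nat.cast : ℕ → ℤ) hpc.symm
    rw [this]; ring
  -- the mod p computation of T
  set G : ZMod p → ZMod p := fun a => (a+1)^2 * (((a * (a-1))⁻¹)^2) with hG
  have hterm : ∀ i ∈ Finset.range (n-1),
      ((n.choose (i+2) : ℕ) : ZMod p)^2 * ((c i : ℕ) : ZMod p)^2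
        = G (((i+2 : ℕ) : ZMod p)) := by
    intro i hi
    rw [Finset.mem_range] at hi
    obtain ⟨-, hcan⟩ := hfacts i hi
    have hb : ((n.choose (i+2) : ℕ) : ZMod p) = (-1)^(i+2) * ((i+2 : ℕ) + 1 : ZMod p) := by
      have := aux_choose_sub_two_mod p hp3 (i+2) (by omega)
      rw [hn]
      push_cast at this ⊢
      rw [this]
    have hi_lt : i < p := by omega
    have hmi : n + (i+2) = p + i := by omega
    have hlucas : (((n + (i+2)).choose i : ℕ) : ZMod p) = 1 := by
      rw [hmi]; exact aux_lucas_p_add p i hi_lt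
    have hp1 : (((p - 1 : ℕ) : ZMod p)) = -1 := by
      have : ((p : ℕ) : ZMod p) = 0 := ZMod.natCast_self p
      push_cast [Nat.cast_sub (by omega : 1 ≤ p)]
      rw [this]; ring
    have hmod : ((c i : ℕ) : ZMod p) * (((i+2 : ℕ) : ZMod p) * ((i+1 : ℕ) : ZMod p)) = -1 := by
      have := congrArg (Nat.cast : ℕ → ZMod p) hcan
      push_cast at this
      push_cast
      rw [this]
      push_cast at hlucas
      rw [hlucas, hp1]
      ring
    set K : ZMod p := ((i+2 : ℕ) : ZMod p) with hK
    have hKone : K - 1 = ((i+1 : ℕ) : ZMod p) := by rw [hK]; push_cast; ring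
    have hK0 : K ≠ 0 := by
      rw [hK, Ne, ZMod.natCast_eq_zero_iff]
      intro hdv
      have := Nat.le_of_dvd (by omega) hdv
      omega
    have hK10 : K - 1 ≠ 0 := by
      rw [hKone, Ne, ZMod.natCast_eq_zero_iff]
      intro hdv
      have := Nat.le_of_dvd (by omega) hdv
      omega
    set u : ZMod p := K * (K - 1) with hu
    have hu0 : u ≠ 0 := mul_ne_zero hK0 hK10
    have huc : u * ((c i : ℕ) : ZMod p) = -1 := by
      rw [hu, hKone]
      linear_combination hmod
    have hc2 : ((c i : ℕ) : ZMod p)^2 = (u⁻¹)^2 := by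
      apply mul_left_cancel₀ (pow_ne_zero 2 hu0)
      rw [← mul_pow, ← mul_pow, huc, mul_inv_cancel₀ hu0]
      norm_num
    rw [hb, mul_pow, hc2, hG]
    have hsq : ((-1 : ZMod p)^(i+2))^2 = 1 := by
      rw [← pow_mul, mul_comm, pow_mul, neg_one_sq, one_pow]
    rw [hsq, one_mul]
  have hTz : ((T : ℤ) : ZMod p) = -13 := by
    rw [hT]
    push_cast
    rw [Finset.sum_congr rfl hterm]
    -- relate to the full sum over ZMod p
    have huniv : ∑ a : ZMod p, G a = -13 := aux_sum_g_eq hp3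
    have hrange : ∑ a : ZMod p, G a = ∑ j ∈ Finset.range p, G ((j : ℕ) : ZMod p) := by
      apply Finset.sum_nbij' (i := fun a => a.val) (j := fun j => ((j : ℕ) : ZMod p))
      · intro a _
        exact Finset.mem_range.mpr (ZMod.val_lt a)
      · intro a _
        exact Finset.mem_univ _
      · intro a _
        exact ZMod.natCast_rightInverse a
      · intro j hj
        exact ZMod.val_natCast_of_lt (Finset.mem_range.mp hj)
      · intro a _
        rw [ZMod.natCast_rightInverse a]
    have hzero1 : G 0 = 0 := by rw [hG]; simp
    have hzero2 : G 1 = 0 := by rw [hG]; norm_num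
    have hzero3 : G (((p-1 : ℕ) : ZMod p)) = 0 := by
      have hp1 : (((p - 1 : ℕ) : ZMod p)) = -1 := by
        have : ((p : ℕ) : ZMod p) = 0 := ZMod.natCast_self p
        push_cast [Nat.cast_sub (by omega : 1 ≤ p)]
        rw [this]; ring
      rw [hp1, hG]
      norm_num
    have hpeel : ∑ j ∈ Finset.range p, G ((j : ℕ) : ZMod p)
        = (∑ j ∈ Finset.range (p-3), G ((j+2 : ℕ) : ZMod p))
          + G (((p-1 : ℕ) : ZMod p)) + G ((1 : ℕ) : ZMod p) + G ((0 : ℕ) : ZMod p) := by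
      have e1 : Finset.range p = Finset.range ((p-1)+1) := by
        rw [show (p-1)+1 = p from by omega]
      have e2 : Finset.range (p-1) = Finset.range (((p-3)+1)+1) := by
        rw [show ((p-3)+1)+1 = p-1 from by omega]
      rw [e1, Finset.sum_range_succ, e2, Finset.sum_range_succ' _ ((p-3)+1),
        Finset.sum_range_succ' _ (p-3)]
      have e3 : ∀ j : ℕ, G ((j+1+1 : ℕ) : ZMod p) = G ((j+2 : ℕ) : ZMod p) := by
        intro j
        have ej : j + 1 + 1 = j + 2 := by omega
        rw [ej]
      simp only [e3]
      push_cast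
      ring
    rw [hpeel, hzero3] at hrange
    rw [show ((1 : ℕ) : ZMod p) = 1 from Nat.cast_one] at hrange
    rw [show ((0 : ℕ) : ZMod p) = 0 from Nat.cast_zero] at hrange
    rw [hzero1, hzero2] at hrange
    rw [show n - 1 = p - 3 from by omega]
    rw [huniv] at hrange
    linear_combination -hrange
  -- conclude
  have hdvd13 : (p:ℤ) ∣ T + 13 := by
    have hz : ((T + 13 : ℤ) : ZMod p) = 0 := by
      rw [Int.cast_add, hTz]
      norm_num
    exact (ZMod.intCast_zmod_eq_zero_iff_dvd _ _).mp hz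
  obtain ⟨t, ht⟩ := hdvd13
  have hn1 : (n.choose 1 : ℤ) = (p:ℤ) - 2 := by
    rw [Nat.choose_one_right, hn]
    push_cast [Nat.cast_sub (by omega : 2 ≤ p)]
    ring
  have hn2 : ((n+1).choose 1 : ℤ) = (p:ℤ) - 1 := by
    rw [Nat.choose_one_right, hn]
    push_cast [Nat.cast_sub (by omega : 2 ≤ p)]
    ring
  have hfin : apery n - (5 - 12*(p:ℤ)) = (p:ℤ)^3 * (t + (p:ℤ) - 6) := by
    rw [hsplit2, hn1, hn2]
    linear_combination ((p:ℤ)^2) * ht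
  rw [Int.ModEq]
  have : (5 - 12*(p:ℤ)) - apery n = (p:ℤ)^3 * (-(t + (p:ℤ) - 6)) := by
    linear_combination -hfin
  rw [show apery (p-2) = apery n from rfl]
  exact (Int.modEq_iff_dvd.mpr ⟨-(t + (p:ℤ) - 6), this⟩).symm.symm
end

section
/- For any prime p, the Apéry number A_p is congruent to 5 modulo p. -/
theorem apery_p_mod (p : ℕ) (hp : p.Prime) :
    apery p ≡ 5 [ZMOD (p : ℤ)] := by
  haveI : Fact p.Prime := ⟨hp⟩
  rw [← ZMod.intCast_eq_intCast_iff]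
  have h2p : (((p + p).choose p : ℕ) : ZMod p) = 2 := by
    have h := Choose.choose_modEq_choose_mod_mul_choose_div (p := p) (n := p + p) (k := p)
    rw [← ZMod.intCast_eq_intCast_iff] at h
    have hmod : (p + p) % p = 0 := by simp [Nat.add_mod]
    have hdiv : (p + p) / p = 2 := by
      rw [← two_mul, Nat.mul_div_cancel _ hp.pos]
    rw [hmod, hdiv, Nat.mod_self, Nat.div_self hp.pos] at h
    simpa using h
  unfold apery
  push_cast
  rw [Finset.sum_range_succ]
  have hmid : ∑ k ∈ Finset.range p, ((p.choose k : ZMod p))^2 * (((p+k).choose k : ZMod p))^2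
      = 1 := by
    rw [Finset.sum_eq_single 0]
    · simp
    · intro k hk hk0
      have hz : ((p.choose k : ℕ) : ZMod p) = 0 := by
        rw [ZMod.natCast_eq_zero_iff]
        exact hp.dvd_choose_self hk0 (Finset.mem_range.mp hk)
      simp [hz]
    · intro h
      exact absurd (Finset.mem_range.mpr hp.pos) h
  rw [hmid, Nat.choose_self, h2p]
  norm_num
end

section
/- For any prime p > 3 and any integer m ≥ 3, defining P_m(x) = (x+1)^3 x^{m-3} + (34x^3+51x^2+27x+5)(x-1)^{m-3} + x^3 (x-2)^{m-3}, we have ∑_{k=0}^{p-1} P_m(k) (-1)^k A_k ≡ 0 (mod p^3). -/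
def P (m : ℕ) (x : ℤ) : ℤ :=
  (x+1)^3 * x^(m-3) + (34*x^3+51*x^2+27*x+5) * (x-1)^(m-3) + x^3 * (x-2)^(m-3)

def F (n k : ℕ) : ℤ := (n.choose k : ℤ)^2 * ((n+k).choose k : ℤ)^2

def g (n : ℕ) : ℕ → ℤ
  | 0 => 0
  | (e+1) => 4*(2*(n:ℤ)+3)*((2*(e:ℤ)+1)*(e:ℤ) - (2*(n:ℤ)+3)^2) * F (n+1) e

lemma cell_main (e d : ℕ) :
    ((e:ℤ)+d+2)^3 * F (e+d+2) (e+1)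
      - (34*((e:ℤ)+d+1)^3+51*((e:ℤ)+d+1)^2+27*((e:ℤ)+d+1)+5) * F (e+d+1) (e+1)
      + ((e:ℤ)+d+1)^3 * F (e+d) (e+1)
    = 4*(2*((e:ℤ)+d+1)+1)*((2*((e:ℤ)+1)+1)*((e:ℤ)+1) - (2*((e:ℤ)+d+1)+1)^2) * F (e+d+1) (e+1)
      - 4*(2*((e:ℤ)+d+1)+1)*((2*(e:ℤ)+1)*(e:ℤ) - (2*((e:ℤ)+d+1)+1)^2) * F (e+d+1) e := by
  have hd1 : ((d:ℚ)+1) ≠ 0 := by positivity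
  have hm : ((e:ℚ)+d+1) ≠ 0 := by positivity
  have hm1 : ((e:ℚ)+d+2) ≠ 0 := by positivity
  have hmk : ((e:ℚ)+d+1+(e+1)) ≠ 0 := by positivity
  have r1 : (((e+d+2).choose (e+1) : ℕ) : ℚ)
      = ((e+d+1).choose (e+1) : ℚ) * ((e:ℚ)+d+2) / ((d:ℚ)+1) := by
    rw [eq_div_iff hd1]
    have h := Nat.choose_mul_succ_eq (e+d+1) (e+1)
    rw [show e+d+1+1 - (e+1) = d+1 from by omega, show e+d+1+1 = e+d+2 from rfl] at h
    have h' := congrArg (Nat.cast (R := ℚ)) h; push_cast at h'; linear_combination -h'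
  have r2 : (((e+d).choose (e+1) : ℕ) : ℚ)
      = ((e+d+1).choose (e+1) : ℚ) * (d:ℚ) / ((e:ℚ)+d+1) := by
    rw [eq_div_iff hm]
    have h := Nat.choose_mul_succ_eq (e+d) (e+1)
    rw [show e+d+1 - (e+1) = d from by omega] at h
    have h' := congrArg (Nat.cast (R := ℚ)) h; push_cast at h'; linear_combination h'
  have r3 : (((e+d+2+(e+1)).choose (e+1) : ℕ) : ℚ)
      = ((e+d+1+(e+1)).choose (e+1) : ℚ) * ((e:ℚ)+d+1+((e:ℚ)+1)+1) / ((e:ℚ)+d+2) := by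
    rw [eq_div_iff hm1]
    have h := Nat.choose_mul_succ_eq (e+d+1+(e+1)) (e+1)
    rw [show e+d+1+(e+1)+1 - (e+1) = e+d+2 from by omega,
        show e+d+1+(e+1)+1 = e+d+2+(e+1) from by omega] at h
    have h' := congrArg (Nat.cast (R := ℚ)) h; push_cast at h'; linear_combination -h'
  have r4 : (((e+d+(e+1)).choose (e+1) : ℕ) : ℚ)
      = ((e+d+1+(e+1)).choose (e+1) : ℚ) * ((e:ℚ)+d+1) / ((e:ℚ)+d+1+((e:ℚ)+1)) := by
    rw [eq_div_iff hmk]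
    have h := Nat.choose_mul_succ_eq (e+d+(e+1)) (e+1)
    rw [show e+d+(e+1)+1 - (e+1) = e+d+1 from by omega,
        show e+d+(e+1)+1 = e+d+1+(e+1) from by omega] at h
    have h' := congrArg (Nat.cast (R := ℚ)) h; push_cast at h'; linear_combination h'
  have r5 : (((e+d+1).choose e : ℕ) : ℚ)
      = ((e+d+1).choose (e+1) : ℚ) * ((e:ℚ)+1) / ((d:ℚ)+1) := by
    rw [eq_div_iff hd1]
    have h := Nat.choose_succ_right_eq (e+d+1) e
    rw [show e+d+1 - e = d+1 from by omega] at h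
    have h' := congrArg (Nat.cast (R := ℚ)) h; push_cast at h'; linear_combination -h'
  have r6 : (((e+d+1+e).choose e : ℕ) : ℚ)
      = ((e+d+1+(e+1)).choose (e+1) : ℚ) * ((e:ℚ)+1) / ((e:ℚ)+d+1+((e:ℚ)+1)) := by
    rw [eq_div_iff hmk]
    have h := Nat.add_one_mul_choose_eq (e+d+1+e) e
    rw [show e+d+1+e+1 = e+d+1+(e+1) from by omega] at h
    have h' := congrArg (Nat.cast (R := ℚ)) h; push_cast at h'; linear_combination h'
  have key : (((((e:ℤ)+d+2)^3 * F (e+d+2) (e+1)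
      - (34*((e:ℤ)+d+1)^3+51*((e:ℤ)+d+1)^2+27*((e:ℤ)+d+1)+5) * F (e+d+1) (e+1)
      + ((e:ℤ)+d+1)^3 * F (e+d) (e+1)) : ℤ) : ℚ)
    = (((4*(2*((e:ℤ)+d+1)+1)*((2*((e:ℤ)+1)+1)*((e:ℤ)+1) - (2*((e:ℤ)+d+1)+1)^2) * F (e+d+1) (e+1)
      - 4*(2*((e:ℤ)+d+1)+1)*((2*(e:ℤ)+1)*(e:ℤ) - (2*((e:ℤ)+d+1)+1)^2) * F (e+d+1) e) : ℤ) : ℚ) := by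
    simp only [F]
    push_cast
    rw [r1, r2, r3, r4, r5, r6]
    field_simp
    ring
  exact_mod_cast key

lemma cell (n k : ℕ) :
    ((n:ℤ)+2)^3 * F (n+2) k
      - (34*((n:ℤ)+1)^3+51*((n:ℤ)+1)^2+27*((n:ℤ)+1)+5) * F (n+1) k
      + ((n:ℤ)+1)^3 * F n k
    = g n (k+1) - g n k := by
  rcases k with _ | e
  · simp only [g, F, Nat.choose_zero_right, Nat.add_zero]
    push_cast; ring
  · by_cases he : e ≤ n
    · obtain ⟨d, rfl⟩ : ∃ d, n = e + d := ⟨n - e, by omega⟩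
      have h := cell_main e d
      simp only [g]
      push_cast
      push_cast at h
      linear_combination h
    · by_cases he2 : e = n+1
      · subst he2
        have hc := Nat.succ_mul_centralBinom_succ (n+1)
        rw [Nat.centralBinom, Nat.centralBinom] at hc
        have hc' := congrArg (Nat.cast (R := ℤ)) hc; push_cast at hc'
        simp only [g, F]
        rw [show n+2+(n+2) = 2*(n+2) from by ring, show n+1+(n+1) = 2*(n+1) from by ring]
        simp only [Nat.choose_self, Nat.choose_succ_self,
            Nat.choose_eq_zero_of_lt (show n < n+2 from by omega)]
        push_cast
        linear_combination (((n:ℤ)+2) * ((2*(n+2)).choose (n+2) : ℤ)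
          + 2*(2*(n:ℤ)+3) * ((2*(n+1)).choose (n+1) : ℤ)) * (((n:ℤ)+2)) * hc'
      · have h1 : n+2 < e+1 := by omega
        simp only [g, F,
          Nat.choose_eq_zero_of_lt (show n+2 < e+1 from by omega),
          Nat.choose_eq_zero_of_lt (show n+1 < e+1 from by omega),
          Nat.choose_eq_zero_of_lt (show n < e+1 from by omega),
          Nat.choose_eq_zero_of_lt (show n+1 < e from by omega)]
        push_cast; ring

lemma apery_rec (n : ℕ) :
    ((n:ℤ)+2)^3 * apery (n+2)
      = (34*((n:ℤ)+1)^3+51*((n:ℤ)+1)^2+27*((n:ℤ)+1)+5) * apery (n+1)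
        - ((n:ℤ)+1)^3 * apery n := by
  have hF : ∀ m : ℕ, apery m = ∑ k ∈ Finset.range (m+1), F m k := fun m => rfl
  have tele : ∑ k ∈ Finset.range (n+3), (g n (k+1) - g n k) = 0 := by
    rw [Finset.sum_range_sub]
    simp only [g, F, Nat.choose_succ_self]
    push_cast; ring
  have hsum : ∑ k ∈ Finset.range (n+3),
      (((n:ℤ)+2)^3 * F (n+2) k
        - (34*((n:ℤ)+1)^3+51*((n:ℤ)+1)^2+27*((n:ℤ)+1)+5) * F (n+1) k
        + ((n:ℤ)+1)^3 * F n k) = 0 := by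
    rw [← tele]
    exact Finset.sum_congr rfl fun k _ => cell n k
  have e2 : ∑ k ∈ Finset.range (n+3), F (n+2) k = apery (n+2) := (hF (n+2)).symm
  have e1 : ∑ k ∈ Finset.range (n+3), F (n+1) k = apery (n+1) := by
    rw [Finset.sum_range_succ, hF (n+1)]
    simp [F, Nat.choose_succ_self]
  have e0 : ∑ k ∈ Finset.range (n+3), F n k = apery n := by
    rw [Finset.sum_range_succ, Finset.sum_range_succ, hF n]
    simp [F, Nat.choose_succ_self, Nat.choose_eq_zero_of_lt (show n < n+2 from by omega)]
  rw [Finset.sum_add_distrib, Finset.sum_sub_distrib, ← Finset.mul_sum, ← Finset.mul_sum,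
      ← Finset.mul_sum, e2, e1, e0] at hsum
  linarith [hsum]

lemma apery_zero : apery 0 = 1 := by decide
lemma apery_one : apery 1 = 5 := by decide

lemma closed (m : ℕ) : ∀ n : ℕ,
    ∑ k ∈ Finset.range (n+1), P m k * (-1)^k * apery k
      = ((n:ℤ)+1)^3 * (-1)^n
          * (((n:ℤ)-1)^(m-3) * apery (n+1) + ((n:ℤ))^(m-3) * apery n) := by
  intro n
  induction n with
  | zero =>
      rw [Finset.sum_range_one]
      simp only [P, apery_zero, apery_one, Nat.cast_zero]
      norm_num
      rw [apery_one]
      ring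
  | succ n ih =>
      rw [Finset.sum_range_succ, ih]
      have hrec := apery_rec n
      simp only [P]
      push_cast
      linear_combination ((-1:ℤ))^n * ((n:ℤ))^(m-3) * hrec

theorem sum_P_apery_mod (p m : ℕ) (hp : p.Prime) (hp3 : 3 < p) (hm : 3 ≤ m) :
    ∑ k ∈ Finset.range p, P m k * (-1)^k * apery k ≡ 0 [ZMOD (p : ℤ)^3] := by
  obtain ⟨q, rfl⟩ : ∃ q, p = q+1 := ⟨p-1, by omega⟩
  have h := closed m q
  have hdvd : ((q:ℤ)+1)^3 ∣ ∑ k ∈ Finset.range (q+1), P m k * (-1)^k * apery k := by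
    rw [h]; exact dvd_mul_of_dvd_left (dvd_mul_right _ _) _
  have hmod := Int.modEq_zero_iff_dvd.mpr hdvd
  have hcast : (((q+1:ℕ) : ℤ))^3 = ((q:ℤ)+1)^3 := by push_cast; ring
  rw [hcast]
  exact hmod
end

section
/- For every integer n ≥ 2 and integer m ≥ 3, with P_m(x) = (x+1)^3 x^{m-3} + (34x^3+51x^2+27x+5)(x-1)^{m-3} + x^3(x-2)^{m-3}, we have the identity ∑_{k=0}^{n} P_m(k)(-1)^k A_k = (-1)^{n-1}(n-1)^{m-3} n^3 A_{n-1} + (-1)^n n^{m-3} (n+1)^3 A_n + (-1)^n (34n^3+51n^2+27n+5)(n-1)^{m-3} A_n. -/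
set_option linter.unusedVariables false

def Fq (n k : ℕ) : ℚ := (n.choose k : ℚ)^2 * ((n+k).choose k : ℚ)^2

def Gq (n k : ℕ) : ℚ :=
  4*(2*(n:ℚ)+1)*((k:ℚ)*(2*(k:ℚ)+1)-(2*(n:ℚ)+1)^2) * Fq n k

lemma core (N K a b a1 a2 a3 a4 a5 a6 : ℚ)
    (hN : N ≠ 0) (hN1 : N + 1 ≠ 0) (hNK : N + K ≠ 0) (hK1 : N + 1 - K ≠ 0)
    (h1 : a1 * (N+1-K) = a * (N+1))
    (h2 : a2 * (N+1) = b * (N+1+K))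
    (h3 : a3 * N = a * (N-K))
    (h4 : a4 * (N+K) = b * N)
    (h5 : a5 * (N+1-K) = a * K)
    (h6 : a6 * (N+K) = b * K) :
    (N+1)^3 * (a1^2*a2^2) - (34*N^3+51*N^2+27*N+5) * (a^2*b^2) + N^3 * (a3^2*a4^2)
      = 4*(2*N+1)*(K*(2*K+1)-(2*N+1)^2) * (a^2*b^2)
        - 4*(2*N+1)*((K-1)*(2*K-1)-(2*N+1)^2) * (a5^2*a6^2) := by
  have e1 : a1 = a * (N+1) / (N+1-K) := (eq_div_iff hK1).mpr h1
  have e2 : a2 = b * (N+1+K) / (N+1) := (eq_div_iff hN1).mpr h2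
  have e3 : a3 = a * (N-K) / N := (eq_div_iff hN).mpr h3
  have e4 : a4 = b * N / (N+K) := (eq_div_iff hNK).mpr h4
  have e5 : a5 = a * K / (N+1-K) := (eq_div_iff hK1).mpr h5
  have e6 : a6 = b * K / (N+K) := (eq_div_iff hNK).mpr h6
  subst e1 e2 e3 e4 e5 e6
  field_simp
  ring

lemma pointwise_mid (p j : ℕ) (hj : j ≤ p) :
    ((p:ℚ)+2)^3 * Fq (p+2) (j+1)
      - (34*((p:ℚ)+1)^3+51*((p:ℚ)+1)^2+27*((p:ℚ)+1)+5) * Fq (p+1) (j+1)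
      + ((p:ℚ)+1)^3 * Fq p (j+1)
      = Gq (p+1) (j+1) - Gq (p+1) j := by
  have hjq : (j:ℚ) ≤ (p:ℚ) := by exact_mod_cast hj
  simp only [Fq, Gq, show p+1+(j+1) = p+j+2 from by omega,
    show p+2+(j+1) = p+j+3 from by omega, show p+(j+1) = p+j+1 from by omega,
    show p+1+j = p+j+1 from by omega]
  have key := core ((p:ℚ)+1) ((j:ℚ)+1)
    ((p+1).choose (j+1) : ℚ) ((p+j+2).choose (j+1) : ℚ)
    ((p+2).choose (j+1) : ℚ) ((p+j+3).choose (j+1) : ℚ)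
    (p.choose (j+1) : ℚ) ((p+j+1).choose (j+1) : ℚ)
    ((p+1).choose j : ℚ) ((p+j+1).choose j : ℚ)
    (by positivity) (by positivity) (by positivity) (by nlinarith)
    ?h1 ?h2 ?h3 ?h4 ?h5 ?h6
  · push_cast
    linear_combination key
  case h1 =>
    have h := Nat.choose_mul_succ_eq (p+1) (j+1)
    rw [show p+1+1 = p+2 from by omega, show p+2-(j+1) = p+1-j from by omega] at h
    qify [show j ≤ p+1 from by omega] at h
    linear_combination -h
  case h2 =>
    have h := Nat.choose_mul_succ_eq (p+j+2) (j+1)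
    rw [show p+j+2+1 = p+j+3 from by omega, show p+j+3-(j+1) = p+2 from by omega] at h
    qify at h
    linear_combination -h
  case h3 =>
    have h := Nat.choose_mul_succ_eq p (j+1)
    rw [show p+1-(j+1) = p-j from by omega] at h
    qify [hj] at h
    linear_combination h
  case h4 =>
    have h := Nat.choose_mul_succ_eq (p+j+1) (j+1)
    rw [show p+j+1+1 = p+j+2 from by omega, show p+j+2-(j+1) = p+1 from by omega] at h
    qify at h
    linear_combination h
  case h5 =>
    have h := Nat.choose_succ_right_eq (p+1) j
    rw [show p+1-j = p+1-j from rfl] at h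
    qify [show j ≤ p+1 from by omega] at h
    linear_combination -h
  case h6 =>
    have h := Nat.add_one_mul_choose_eq (p+j+1) j
    rw [show p+j+1+1 = p+j+2 from by omega] at h
    qify at h
    linear_combination h

def gs (n : ℕ) : ℕ → ℚ
  | 0 => 0
  | (j+1) => Gq n j

lemma pointwise (p k : ℕ) :
    ((p:ℚ)+2)^3 * Fq (p+2) k
      - (34*((p:ℚ)+1)^3+51*((p:ℚ)+1)^2+27*((p:ℚ)+1)+5) * Fq (p+1) k
      + ((p:ℚ)+1)^3 * Fq p k
      = gs (p+1) (k+1) - gs (p+1) k := by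
  match k with
  | 0 =>
    simp only [gs, Fq, Gq, Nat.choose_zero_right, Nat.add_zero]
    push_cast
    ring
  | (j+1) =>
    show _ = Gq (p+1) (j+1) - Gq (p+1) j
    rcases Nat.lt_or_ge j (p+1) with h | h
    · exact pointwise_mid p j (by omega)
    · rcases Nat.eq_or_lt_of_le h with h3 | h3
      · -- j = p+1, k = p+2 : central binomial case
        subst h3
        have hz1 : (p+1).choose (p+1+1) = 0 := Nat.choose_eq_zero_of_lt (by omega)
        have hz2 : p.choose (p+1+1) = 0 := Nat.choose_eq_zero_of_lt (by omega)
        simp only [Fq, Gq, hz1, hz2, Nat.cast_zero]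
        rw [show p+2+(p+1+1) = 2*(p+2) from by omega,
            show p+1+(p+1) = 2*(p+1) from by omega,
            ]
        simp only [Nat.choose_self]
        have h := Nat.succ_mul_centralBinom_succ (p+1)
        rw [Nat.centralBinom_eq_two_mul_choose, Nat.centralBinom_eq_two_mul_choose] at h
        qify at h
        push_cast
        set X : ℚ := ((2*(p+2)).choose (p+2) : ℚ)
        set Y : ℚ := ((2*(p+1)).choose (p+1) : ℚ)
        linear_combination ((p:ℚ)+2) * (((p:ℚ)+2) * X + 2*(2*(p:ℚ)+3)*Y) * h
      · -- k ≥ p+3 : everything vanishes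
        have hz1 : (p+2).choose (j+1) = 0 := Nat.choose_eq_zero_of_lt (by omega)
        have hz2 : (p+1).choose (j+1) = 0 := Nat.choose_eq_zero_of_lt (by omega)
        have hz3 : p.choose (j+1) = 0 := Nat.choose_eq_zero_of_lt (by omega)
        have hz4 : (p+1).choose j = 0 := Nat.choose_eq_zero_of_lt (by omega)
        simp [Fq, Gq, hz1, hz2, hz3, hz4]

lemma apery_eq_sum (n N : ℕ) (h : n < N) :
    (apery n : ℚ) = ∑ k ∈ Finset.range N, Fq n k := by
  have : (apery n : ℚ) = ∑ k ∈ Finset.range (n+1), Fq n k := by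
    simp only [apery, Fq]
    push_cast
    rfl
  rw [this]
  apply Finset.sum_subset (Finset.range_subset_range.mpr (by omega))
  intro k _ hk
  simp only [Finset.mem_range, not_lt] at hk
  simp [Fq, Nat.choose_eq_zero_of_lt (by omega : n < k)]

lemma rec_q (p : ℕ) :
    ((p:ℚ)+2)^3 * (apery (p+2) : ℚ)
      = (34*((p:ℚ)+1)^3+51*((p:ℚ)+1)^2+27*((p:ℚ)+1)+5) * (apery (p+1) : ℚ)
        - ((p:ℚ)+1)^3 * (apery p : ℚ) := by
  have key : ∑ k ∈ Finset.range (p+3),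
      (((p:ℚ)+2)^3 * Fq (p+2) k
        - (34*((p:ℚ)+1)^3+51*((p:ℚ)+1)^2+27*((p:ℚ)+1)+5) * Fq (p+1) k
        + ((p:ℚ)+1)^3 * Fq p k) = 0 := by
    rw [Finset.sum_congr rfl (fun k _ => pointwise p k), Finset.sum_range_sub (gs (p+1))]
    show Gq (p+1) (p+2) - 0 = 0
    simp [Gq, Fq, Nat.choose_eq_zero_of_lt (by omega : p+1 < p+2)]
  rw [apery_eq_sum (p+2) (p+3) (by omega), apery_eq_sum (p+1) (p+3) (by omega),
      apery_eq_sum p (p+3) (by omega)]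
  simp only [Finset.sum_add_distrib, Finset.sum_sub_distrib, ← Finset.mul_sum] at key
  linarith [key]

lemma rec_int (n : ℕ) (hn : 1 ≤ n) :
    ((n:ℤ)+1)^3 * apery (n+1)
      = (34*(n:ℤ)^3+51*(n:ℤ)^2+27*(n:ℤ)+5) * apery n - (n:ℤ)^3 * apery (n-1) := by
  obtain ⟨p, rfl⟩ : ∃ p, n = p + 1 := ⟨n - 1, by omega⟩
  have h := rec_q p
  simp only [Nat.add_sub_cancel]
  push_cast
  exact_mod_cast h

theorem sum_P_apery_closed_form (n m : ℕ) (hn : 2 ≤ n) (hm : 3 ≤ m) :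
    ∑ k ∈ Finset.range (n+1), P m k * (-1)^k * apery k =
      (-1)^(n-1) * ((n : ℤ)-1)^(m-3) * (n : ℤ)^3 * apery (n-1)
      + (-1)^n * (n : ℤ)^(m-3) * ((n : ℤ)+1)^3 * apery n
      + (-1)^n * (34*(n : ℤ)^3+51*(n : ℤ)^2+27*(n : ℤ)+5) * ((n : ℤ)-1)^(m-3) * apery n := by
  induction n, hn using Nat.le_induction with
  | base =>
    have a0 : apery 0 = 1 := by norm_num [apery]
    have a1 : apery 1 = 5 := by norm_num [apery, Finset.sum_range_succ]
    have a2 : apery 2 = 73 := by norm_num [apery, Finset.sum_range_succ, Nat.choose]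
    rw [Finset.sum_range_succ, Finset.sum_range_succ, Finset.sum_range_succ,
        Finset.sum_range_zero]
    simp only [P, show (2:ℕ)-1 = 1 from rfl, a0, a1, a2]
    push_cast
    ring
  | succ n hn IH =>
    obtain ⟨p, rfl⟩ : ∃ p, n = p + 2 := ⟨n - 2, by omega⟩
    have hrec := rec_int (p+2) (by omega)
    simp only [show p+2-1 = p+1 from rfl] at hrec
    rw [Finset.sum_range_succ, IH]
    simp only [show p+3-1 = p+2 from rfl, show p+2-1 = p+1 from rfl, P]
    push_cast
    push_cast at hrec
    linear_combination ((-1:ℤ))^(p+3) * ((p:ℤ)+1)^(m-3) * hrec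
end

section
/- For every positive odd integer m, the polynomial (2x+1)^m can be written as a rational linear combination a_1 (2x+1) + ∑_{3 ≤ k ≤ m} a_k P_k(x), where P_k(x) = (x+1)^3 x^{k-3} + (34x^3+51x^2+27x+5)(x-1)^{k-3} + x^3(x-2)^{k-3} for k ≥ 3. -/
def Prat (k : ℕ) (x : ℚ) : ℚ :=
  (x+1)^3 * x^(k-3) + (34*x^3+51*x^2+27*x+5) * (x-1)^(k-3) + x^3 * (x-2)^(k-3)

namespace LinCombAux

open Polynomial Finset

/-- `f` is representable as a rational combination of `2x+1` and the `Prat k`, `3 ≤ k ≤ m`. -/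
def Rep (m : ℕ) (f : ℚ → ℚ) : Prop :=
  ∃ a : ℕ → ℚ, ∀ x : ℚ, f x = a 1 * (2*x+1) + ∑ k ∈ Finset.Icc 3 m, a k * Prat k x

lemma rep_congr {m : ℕ} {f g : ℚ → ℚ} (hfg : ∀ x, f x = g x) (hf : Rep m f) : Rep m g := by
  obtain ⟨a, ha⟩ := hf
  exact ⟨a, fun x => (hfg x) ▸ ha x⟩

lemma rep_of_zero {m : ℕ} {g : ℚ → ℚ} (hg : ∀ x, g x = 0) : Rep m g := by
  refine ⟨0, fun x => ?_⟩
  simp [hg x]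

lemma rep_linear {m : ℕ} (c d : ℚ) {f g : ℚ → ℚ} (hf : Rep m f) (hg : Rep m g) :
    Rep m (fun x => c * f x + d * g x) := by
  obtain ⟨a, ha⟩ := hf
  obtain ⟨b, hb⟩ := hg
  refine ⟨fun k => c * a k + d * b k, fun x => ?_⟩
  show c * f x + d * g x = (c * a 1 + d * b 1) * (2*x+1)
      + ∑ k ∈ Finset.Icc 3 m, (c * a k + d * b k) * Prat k x
  have : ∑ k ∈ Finset.Icc 3 m, (c * a k + d * b k) * Prat k x
      = c * ∑ k ∈ Finset.Icc 3 m, a k * Prat k x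
        + d * ∑ k ∈ Finset.Icc 3 m, b k * Prat k x := by
    rw [Finset.mul_sum, Finset.mul_sum, ← Finset.sum_add_distrib]
    exact Finset.sum_congr rfl (fun k _ => by ring)
  rw [this, ha x, hb x]; ring

lemma rep_smul {m : ℕ} (c : ℚ) {f : ℚ → ℚ} (hf : Rep m f) : Rep m (fun x => c * f x) := by
  have := rep_linear c 0 hf hf
  exact rep_congr (fun x => by ring) this

lemma rep_sum {m : ℕ} {ι : Type*} (s : Finset ι) (f : ι → ℚ → ℚ)
    (h : ∀ i ∈ s, Rep m (f i)) : Rep m (fun x => ∑ i ∈ s, f i x) := by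
  classical
  induction s using Finset.induction_on with
  | empty => exact rep_of_zero (fun x => by simp)
  | @insert a s hni ih =>
    have h1 : Rep m (f a) := h a (Finset.mem_insert_self a s)
    have h2 : Rep m (fun x => ∑ i ∈ s, f i x) :=
      ih (fun i hi => h i (Finset.mem_insert_of_mem hi))
    have := rep_linear 1 1 h1 h2
    refine rep_congr (fun x => ?_) this
    rw [Finset.sum_insert hni]; ring

lemma rep_P {m k : ℕ} (hk : k ∈ Finset.Icc 3 m) : Rep m (fun x => Prat k x) := by
  classical
  refine ⟨fun j => if j = k then 1 else 0, fun x => ?_⟩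
  have hk3 : 3 ≤ k := (Finset.mem_Icc.mp hk).1
  have h1 : (1 : ℕ) ≠ k := by omega
  show Prat k x = _
  have : ∑ j ∈ Finset.Icc 3 m, (if j = k then (1:ℚ) else 0) * Prat j x
      = ∑ j ∈ Finset.Icc 3 m, (if j = k then Prat j x else 0) :=
    Finset.sum_congr rfl (fun j _ => by split <;> simp)
  rw [this, Finset.sum_ite_eq' (Finset.Icc 3 m) k (fun j => Prat j x)]
  simp [hk, h1]

lemma rep_mono {m m' : ℕ} (h : m ≤ m') {f : ℚ → ℚ} (hf : Rep m f) : Rep m' f := by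
  classical
  obtain ⟨a, ha⟩ := hf
  refine ⟨fun k => if k = 1 then a 1 else (if k ≤ m then a k else 0), fun x => ?_⟩
  rw [ha x]
  simp only [if_pos rfl]
  congr 1
  rw [← Finset.sum_subset (Finset.Icc_subset_Icc_right h)]
  · exact Finset.sum_congr rfl (fun k hk => by
      have h3 : 3 ≤ k ∧ k ≤ m := Finset.mem_Icc.mp hk
      have hne : k ≠ 1 := by omega
      simp [hne, h3.2])
  · intro k hk hk'
    have h3 : 3 ≤ k ∧ k ≤ m' := Finset.mem_Icc.mp hk
    have hle : ¬ k ≤ m := fun hle => hk' (Finset.mem_Icc.mpr ⟨h3.1, hle⟩)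
    have h1 : k ≠ 1 := by omega
    simp [h1, hle]

lemma coeff_comp_neg (p : ℚ[X]) (j : ℕ) :
    (p.comp (-X)).coeff j = (-1)^j * p.coeff j := by
  induction p using Polynomial.induction_on' with
  | add p q hp hq => simp [add_comp, coeff_add, hp, hq, mul_add]
  | monomial i a =>
    have h1 : Polynomial.C ((-1:ℚ)^i) = ((-1:ℚ[X]))^i := by rw [map_pow, map_neg, map_one]
    rw [monomial_comp, neg_pow, ← h1, coeff_monomial,
      show Polynomial.C a * (Polynomial.C ((-1:ℚ)^i) * X^i)
        = Polynomial.C ((-1)^i * a) * X^i by rw [C_mul]; ring,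
      coeff_C_mul, coeff_X_pow]
    by_cases hij : i = j
    · subst hij; simp
    · simp [hij, Ne.symm hij]

/-- The key identity: for even `n`, the binomial combination of the `Prat k`
equals `36 (2x+1)^(n+3)` plus a combination of odd lower powers of `2x+1`. -/
lemma key (n : ℕ) (hn : Even n) : ∃ h : ℕ → ℚ, (∀ j, Even j → h j = 0) ∧ ∀ x : ℚ,
    ∑ k ∈ Finset.Icc 3 (n+3), ((n.choose (k-3) : ℚ) * 3^(n+3-k) * 2^k) * Prat k x
    = 36 * (2*x+1)^(n+3) + ∑ j ∈ Finset.range (n+3), h j * (2*x+1)^j := by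
  classical
  set H : ℚ[X] := (X + C 1)^3*(X + C 2)^n + (C 34*X^3+C 6*X)*X^n + (X - C 1)^3*(X - C 2)^n
    with hH
  have hOdd3 : Odd (n+3) := by
    obtain ⟨t, ht⟩ := hn
    exact ⟨t+1, by omega⟩
  -- oddness of H
  have hodd : ∀ y : ℚ, H.eval (-y) = - H.eval y := by
    intro y
    have e1 : (-y+2)^n = (y-2)^n := by
      rw [show (-y+2) = -(y-2) by ring, hn.neg_pow]
    have e2 : (-y:ℚ)^n = y^n := hn.neg_pow y
    have e3 : (-y-2)^n = (y+2)^n := by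
      rw [show (-y-2) = -(y+2) by ring, hn.neg_pow]
    simp only [hH, eval_add, eval_mul, eval_pow, eval_X, eval_C, eval_neg, eval_sub]
    rw [show (-y+(2:ℚ)) = (-y+2) by ring] at e1
    rw [e2, show (-y-(2:ℚ))^n = (y+2)^n from e3, show (-y+(2:ℚ))^n = (y-2)^n from e1]
    ring
  have hdeg : H.natDegree ≤ n + 3 := by
    apply natDegree_add_le_of_degree_le
    apply natDegree_add_le_of_degree_le
    · apply le_trans (natDegree_mul_le)
      calc ((X + C 1)^3 : ℚ[X]).natDegree + ((X + C 2)^n : ℚ[X]).natDegree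
          ≤ 3 * ((X:ℚ[X]) + C 1).natDegree + n * ((X:ℚ[X]) + C 2).natDegree := by
            gcongr <;> exact natDegree_pow_le
        _ ≤ n + 3 := by rw [natDegree_X_add_C, natDegree_X_add_C]; omega
    · apply le_trans (natDegree_mul_le)
      have d1 : ((C 34*X^3+C 6*X) : ℚ[X]).natDegree ≤ 3 := by compute_degree
      have d2 : ((X:ℚ[X])^n).natDegree ≤ n := natDegree_X_pow_le n
      omega
    · apply le_trans (natDegree_mul_le)
      calc ((X - C 1)^3 : ℚ[X]).natDegree + ((X - C 2)^n : ℚ[X]).natDegree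
          ≤ 3 * ((X:ℚ[X]) - C 1).natDegree + n * ((X:ℚ[X]) - C 2).natDegree := by
            gcongr <;> exact natDegree_pow_le
        _ ≤ n + 3 := by rw [natDegree_X_sub_C, natDegree_X_sub_C]; omega
  have hcoeff : H.coeff (n+3) = 36 := by
    have m1 : (((X + C 1)^3*(X + C 2)^n) : ℚ[X]).Monic :=
      ((monic_X_add_C (1:ℚ)).pow 3).mul ((monic_X_add_C (2:ℚ)).pow n)
    have d1 : (((X + C 1)^3*(X + C 2)^n) : ℚ[X]).natDegree = n + 3 := by
      rw [((monic_X_add_C (1:ℚ)).pow 3).natDegree_mul ((monic_X_add_C (2:ℚ)).pow n),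
        natDegree_pow, natDegree_pow, natDegree_X_add_C, natDegree_X_add_C]
      omega
    have c1 : (((X + C 1)^3*(X + C 2)^n) : ℚ[X]).coeff (n+3) = 1 := by
      have := m1.coeff_natDegree
      rwa [d1] at this
    have m3 : (((X - C 1)^3*(X - C 2)^n) : ℚ[X]).Monic :=
      ((monic_X_sub_C (1:ℚ)).pow 3).mul ((monic_X_sub_C (2:ℚ)).pow n)
    have d3 : (((X - C 1)^3*(X - C 2)^n) : ℚ[X]).natDegree = n + 3 := by
      rw [((monic_X_sub_C (1:ℚ)).pow 3).natDegree_mul ((monic_X_sub_C (2:ℚ)).pow n),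
        natDegree_pow, natDegree_pow, natDegree_X_sub_C, natDegree_X_sub_C]
      omega
    have c3 : (((X - C 1)^3*(X - C 2)^n) : ℚ[X]).coeff (n+3) = 1 := by
      have := m3.coeff_natDegree
      rwa [d3] at this
    have c2 : (((C 34*X^3+C 6*X)*X^n) : ℚ[X]).coeff (n+3) = 34 := by
      rw [show n + 3 = 3 + n by omega, coeff_mul_X_pow]
      simp [coeff_add, coeff_C_mul, coeff_X_pow]
    rw [hH, coeff_add, coeff_add, c1, c2, c3]
    norm_num
  set H₁ : ℚ[X] := H - C 36 * X^(n+3) with hH₁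
  have hc1 : H₁.coeff (n+3) = 0 := by
    rw [hH₁, coeff_sub, hcoeff, coeff_C_mul, coeff_X_pow]
    simp
  have hdeg1 : H₁.natDegree ≤ n + 3 := by
    refine le_trans (natDegree_sub_le _ _) (max_le hdeg ?_)
    exact le_trans (natDegree_C_mul_le _ _) (natDegree_X_pow_le _)
  have hd1 : H₁.natDegree < n + 3 := by
    rcases eq_or_ne H₁ 0 with h0 | h0
    · rw [h0, natDegree_zero]; omega
    · refine lt_of_le_of_ne hdeg1 (fun e => h0 ?_)
      refine leadingCoeff_eq_zero.mp ?_
      rw [leadingCoeff, e]; exact hc1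
  have hcomp : H₁.comp (-X) = -H₁ := by
    apply Polynomial.funext
    intro y
    simp only [eval_comp, eval_neg, eval_X]
    rw [hH₁]
    simp only [eval_sub, eval_mul, eval_pow, eval_C, eval_X, eval_neg]
    rw [hodd y, hOdd3.neg_pow]
    ring
  have hzero : ∀ j, Even j → H₁.coeff j = 0 := by
    intro j hj
    have h := coeff_comp_neg H₁ j
    rw [hcomp, coeff_neg] at h
    have hpow : ((-1:ℚ))^j = 1 := by rw [hj.neg_pow, one_pow]
    rw [hpow, one_mul] at h
    linarith
  refine ⟨fun j => H₁.coeff j, hzero, fun x => ?_⟩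
  -- right-hand side equals `H.eval (2x+1)`
  have hRHS : (36:ℚ) * (2*x+1)^(n+3) + ∑ j ∈ Finset.range (n+3), H₁.coeff j * (2*x+1)^j
      = H.eval (2*x+1) := by
    rw [← eval_eq_sum_range' hd1]
    rw [hH₁]
    simp only [eval_sub, eval_mul, eval_pow, eval_C, eval_X]
    ring
  rw [hRHS]
  -- left-hand side equals `H.eval (2x+1)`
  rw [show Finset.Icc 3 (n+3) = Finset.Ico 3 (n+4) from (Finset.Ico_add_one_right_eq_Icc 3 (n+3)).symm,
    Finset.sum_Ico_eq_sum_range, show n + 4 - 3 = n + 1 by omega]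
  have hterm : ∀ i ∈ Finset.range (n+1),
      ((n.choose ((3+i)-3) : ℚ) * 3^(n+3-(3+i)) * 2^(3+i)) * Prat (3+i) x
      = (2*x+2)^3 * ((2*x)^i * 3^(n-i) * (n.choose i : ℚ))
        + (34*(2*x+1)^3+6*(2*x+1)) * ((2*x-2)^i * 3^(n-i) * (n.choose i : ℚ))
        + (2*x)^3 * ((2*x-4)^i * 3^(n-i) * (n.choose i : ℚ)) := by
    intro i hi
    have hi' : i ≤ n := by
      have := Finset.mem_range.mp hi; omega
    have e0 : (3+i) - 3 = i := by omega
    have e0' : n + 3 - (3+i) = n - i := by omega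
    have hP : Prat (3+i) x
        = (x+1)^3 * x^i + (34*x^3+51*x^2+27*x+5) * (x-1)^i + x^3 * (x-2)^i := by
      unfold Prat; rw [e0]
    rw [e0, e0', hP]
    rw [pow_add (2:ℚ) 3 i,
      show ((2:ℚ)*x)^i = 2^i * x^i from mul_pow 2 x i,
      show ((2:ℚ)*x-2)^i = 2^i * (x-1)^i by rw [show (2:ℚ)*x-2 = 2*(x-1) by ring, mul_pow],
      show ((2:ℚ)*x-4)^i = 2^i * (x-2)^i by rw [show (2:ℚ)*x-4 = 2*(x-2) by ring, mul_pow]]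
    ring
  rw [Finset.sum_congr rfl hterm]
  rw [Finset.sum_add_distrib, Finset.sum_add_distrib, ← Finset.mul_sum, ← Finset.mul_sum,
    ← Finset.mul_sum, ← add_pow (2*x) (3:ℚ) n, ← add_pow (2*x-2) (3:ℚ) n,
    ← add_pow (2*x-4) (3:ℚ) n]
  rw [hH]
  simp only [eval_add, eval_mul, eval_pow, eval_C, eval_X, eval_sub]
  rw [show (2*x+1+1:ℚ) = 2*x+2 by ring, show (2*x+1+2:ℚ) = 2*x+3 by ring,
    show (2*x+1-1:ℚ) = 2*x by ring, show (2*x+1-2:ℚ) = 2*x-1 by ring,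
    show (2*x-2+3:ℚ) = 2*x+1 by ring, show (2*x-4+3:ℚ) = 2*x-1 by ring]

lemma main : ∀ m : ℕ, Odd m → Rep m (fun x => (2*x+1)^m) := by
  intro m
  induction m using Nat.strong_induction_on with
  | _ m ih =>
    intro hodd
    obtain ⟨t, ht⟩ := hodd
    rcases Nat.lt_or_ge m 3 with hlt | hge
    · have hm1 : m = 1 := by omega
      subst hm1
      refine ⟨fun k => if k = 1 then 1 else 0, fun x => ?_⟩
      rw [Finset.Icc_eq_empty (by omega)]
      simp
    · have hn : m = (m - 3) + 3 := by omega
      set n := m - 3 with hn3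
      have hEven : Even n := ⟨t - 1, by omega⟩
      obtain ⟨h, hz, hid⟩ := key n hEven
      have repA : Rep m (fun x => ∑ k ∈ Finset.Icc 3 m,
          ((n.choose (k-3) : ℚ) * 3^(n+3-k) * 2^k) * Prat k x) :=
        rep_sum _ _ (fun k hk => rep_smul _ (rep_P hk))
      have repB : Rep m (fun x => ∑ j ∈ Finset.range m, h j * (2*x+1)^j) := by
        refine rep_sum _ _ (fun j hj => ?_)
        rcases Nat.even_or_odd j with he | ho
        · exact rep_of_zero (fun x => by rw [hz j he]; ring)
        · have hjm : j < m := Finset.mem_range.mp hj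
          exact rep_smul _ (rep_mono (le_of_lt hjm) (ih j hjm ho))
      have hrep := rep_linear (1/36) (-(1/36)) repA repB
      refine rep_congr (fun x => ?_) hrep
      show (1/36 : ℚ) * _ + (-(1/36) : ℚ) * _ = (2*x+1)^m
      rw [hn]
      linarith [hid x]

end LinCombAux

theorem lin_comb_P (m : ℕ) (hm : 0 < m) (hodd : Odd m) :
    ∃ a : ℕ → ℚ, ∀ x : ℚ,
      (2*x+1)^m = a 1 * (2*x+1) + ∑ k ∈ Finset.Icc 3 m, a k * Prat k x :=
  LinCombAux.main m hodd
end

section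
/- For every positive integer n, ∑_{k=1}^{n} (-1)^{n-k} (9k^2+10k+3) k^2 A_k > 0. -/
lemma apery_pos (k : ℕ) : 0 < apery k := by
  unfold apery
  apply Finset.sum_pos'
  · intro i _; positivity
  · exact ⟨0, Finset.mem_range.mpr (Nat.succ_pos k), by simp⟩

lemma apery_mono (k : ℕ) : apery k ≤ apery (k+1) := by
  unfold apery
  calc ∑ j ∈ Finset.range (k+1), (k.choose j : ℤ)^2 * ((k+j).choose j : ℤ)^2
      ≤ ∑ j ∈ Finset.range (k+1), ((k+1).choose j : ℤ)^2 * ((k+1+j).choose j : ℤ)^2 := by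
        apply Finset.sum_le_sum
        intro j _
        have h1 : (k.choose j : ℤ) ≤ ((k+1).choose j : ℤ) := by
          exact_mod_cast Nat.choose_le_choose j (Nat.le_succ k)
        have h2 : ((k+j).choose j : ℤ) ≤ ((k+1+j).choose j : ℤ) := by
          exact_mod_cast Nat.choose_le_choose j (by omega : k+j ≤ k+1+j)
        have h3 : (0:ℤ) ≤ (k.choose j : ℤ) := by positivity
        have h4 : (0:ℤ) ≤ ((k+j).choose j : ℤ) := by positivity
        gcongr
    _ ≤ ∑ j ∈ Finset.range (k+2), ((k+1).choose j : ℤ)^2 * ((k+1+j).choose j : ℤ)^2 := by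
        apply Finset.sum_le_sum_of_subset_of_nonneg
        · exact Finset.range_subset_range.mpr (by omega)
        · intro i _ _; positivity

noncomputable def b (k : ℕ) : ℤ := (9*(k:ℤ)^2+10*k+3) * (k:ℤ)^2 * apery k

lemma b_pos {k : ℕ} (hk : 1 ≤ k) : 0 < b k := by
  have := apery_pos k
  have hk' : (1:ℤ) ≤ (k:ℤ) := by exact_mod_cast hk
  have : (0:ℤ) < (9*(k:ℤ)^2+10*k+3) * (k:ℤ)^2 := by positivity
  unfold b; exact mul_pos this (apery_pos k)

lemma b_lt (k : ℕ) (hk : 1 ≤ k) : b k < b (k+1) := by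
  unfold b
  have hA := apery_pos k
  have hAm := apery_mono k
  have hk' : (1:ℤ) ≤ (k:ℤ) := by exact_mod_cast hk
  have hc : (0:ℤ) < (9*(k:ℤ)^2+10*k+3) * (k:ℤ)^2 := by positivity
  have hc2 : ((9*(k:ℤ)^2+10*k+3) * (k:ℤ)^2) < (9*((k:ℤ)+1)^2+10*((k:ℤ)+1)+3) * ((k:ℤ)+1)^2 := by nlinarith
  calc (9*(k:ℤ)^2+10*k+3) * (k:ℤ)^2 * apery k
      < (9*((k:ℤ)+1)^2+10*((k:ℤ)+1)+3) * ((k:ℤ)+1)^2 * apery k := by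
        exact mul_lt_mul_of_pos_right hc2 hA
    _ ≤ (9*((k:ℤ)+1)^2+10*((k:ℤ)+1)+3) * ((k:ℤ)+1)^2 * apery (k+1) := by
        apply mul_le_mul_of_nonneg_left hAm
        nlinarith
    _ = (9*((k+1:ℕ):ℤ)^2+10*((k+1:ℕ):ℤ)+3) * ((k+1:ℕ):ℤ)^2 * apery (k+1) := by
        push_cast; ring

noncomputable def T (n : ℕ) : ℤ :=
  ∑ k ∈ Finset.Icc 1 n, (-1)^(n-k) * (9*(k : ℤ)^2+10*k+3) * (k : ℤ)^2 * apery k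

lemma T_succ (n : ℕ) : T (n+1) = b (n+1) - T n := by
  unfold T b
  rw [Finset.sum_Icc_succ_top (by omega : 1 ≤ n+1)]
  have : ∀ k ∈ Finset.Icc 1 n,
      (-1:ℤ)^(n+1-k) * (9*(k : ℤ)^2+10*k+3) * (k : ℤ)^2 * apery k
      = -((-1)^(n-k) * (9*(k : ℤ)^2+10*k+3) * (k : ℤ)^2 * apery k) := by
    intro k hk
    have hk' := Finset.mem_Icc.mp hk
    have : n+1-k = (n-k)+1 := by omega
    rw [this, pow_succ]
    ring
  rw [Finset.sum_congr rfl this, Finset.sum_neg_distrib]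
  simp only [Nat.sub_self, pow_zero]
  push_cast
  ring

lemma T_key : ∀ n, 1 ≤ n → 0 < T n ∧ T n ≤ b n := by
  intro n
  induction n with
  | zero => omega
  | succ m ih =>
    intro _
    rcases Nat.eq_or_lt_of_le (Nat.one_le_iff_ne_zero.mpr (by omega) : 1 ≤ m+1) with h | h
    · have hm : m = 0 := by omega
      subst hm
      have : T 1 = b 1 := by
        unfold T b
        simp
      rw [this]
      exact ⟨b_pos le_rfl, le_rfl⟩
    · have hm : 1 ≤ m := by omega
      obtain ⟨h1, h2⟩ := ih hm
      rw [T_succ]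
      have := b_lt m hm
      constructor <;> [linarith; linarith]

theorem T_pos (n : ℕ) (hn : 0 < n) :
    0 < ∑ k ∈ Finset.Icc 1 n, (-1)^(n-k) * (9*(k : ℤ)^2+10*k+3) * (k : ℤ)^2 * apery k := by
  exact (T_key n hn).1
end

section
/- For every positive integer n, ∑_{m=0}^{n-1} C(2m,m) ∑_{k=0}^{m} C(m,k) C(m+k,k) C(n-1,m+k) C(n+m+k,m+k) ≡ (-1)^{n-1} n (mod 3). -/
open Finset

/-! ### Part 1: the exact alternating-sum identity -/

/-- `hS N M K = ∑_{j=0}^{N} (-1)^j C(N,j) C(M+j,K)`. -/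
def hS (N M K : ℕ) : ℤ :=
  ∑ j ∈ Finset.range (N+1), (-1:ℤ)^j * (N.choose j) * ((M+j).choose K)

lemma hrec2 (N M K : ℕ) : hS N (M+1) (K+1) = hS N M K + hS N M (K+1) := by
  unfold hS
  rw [← Finset.sum_add_distrib]
  refine Finset.sum_congr rfl fun j _ => ?_
  have h1 : M + 1 + j = (M + j) + 1 := by omega
  rw [h1, Nat.choose_succ_succ]
  push_cast
  ring

lemma hrec1 (N M K : ℕ) : hS (N+1) M K = hS N M K - hS N (M+1) K := by
  unfold hS
  rw [Finset.sum_range_succ'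
    (fun j => (-1:ℤ)^j * ((N+1).choose j) * ((M+j).choose K)) (N+1)]
  have e1 : ∀ i, (-1:ℤ)^(i+1) * ((N+1).choose (i+1)) * ((M+(i+1)).choose K)
      = -((-1:ℤ)^i * (N.choose i) * ((M+1+i).choose K))
        + (-1:ℤ)^(i+1) * (N.choose (i+1)) * ((M+(i+1)).choose K) := by
    intro i
    rw [Nat.choose_succ_succ]
    have : M + (i+1) = M + 1 + i := by omega
    rw [this]
    push_cast
    ring
  simp only [e1]
  rw [Finset.sum_add_distrib, Finset.sum_neg_distrib]
  have e2 : ∑ i ∈ Finset.range (N+1), (-1:ℤ)^(i+1) * (N.choose (i+1)) * ((M+(i+1)).choose K)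
      = ∑ i ∈ Finset.range N, (-1:ℤ)^(i+1) * (N.choose (i+1)) * ((M+(i+1)).choose K) := by
    rw [Finset.sum_range_succ, Nat.choose_succ_self]
    norm_num
  rw [e2]
  have e3 : ∑ j ∈ Finset.range (N+1), (-1:ℤ)^j * (N.choose j) * ((M+j).choose K)
      = (∑ i ∈ Finset.range N, (-1:ℤ)^(i+1) * (N.choose (i+1)) * ((M+(i+1)).choose K))
        + (-1:ℤ)^0 * (N.choose 0) * ((M+0).choose K) :=
    Finset.sum_range_succ' (fun j => (-1:ℤ)^j * (N.choose j) * ((M+j).choose K)) N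
  rw [e3]
  simp [Nat.choose_zero_right]
  ring

lemma hval : ∀ (N K M : ℕ), N ≤ K →
    hS N M K = (-1:ℤ)^N * (M.choose (K-N)) := by
  intro N
  induction N with
  | zero =>
    intro K M _
    simp [hS]
  | succ N ih =>
    intro K M hNK
    obtain ⟨K', rfl⟩ : ∃ K', K = K' + 1 := ⟨K - 1, by omega⟩
    have hN : N ≤ K' := by omega
    rw [hrec1, hrec2 N M K']
    rw [ih K' M hN]
    have : K' + 1 - (N + 1) = K' - N := by omega
    rw [this]
    ring

/-! ### Part 2: `T(j) = ∑_m C(j,m)^2 C(2m,j) ≡ (-1)^j (mod 3)` via Lucas -/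

def Tz (j : ℕ) : ZMod 3 :=
  ∑ m ∈ Finset.range (j+1), (j.choose m : ZMod 3)^2 * ((2*m).choose j : ZMod 3)

instance : Fact (Nat.Prime 3) := ⟨by norm_num⟩

lemma lucas3 (a b c d : ℕ) (hc : c < 3) (_hd : d < 3) :
    ((3*a+c).choose (3*b+d) : ZMod 3) = (a.choose b : ZMod 3) * (c.choose d : ZMod 3) := by
  have h := Choose.choose_modEq_choose_mod_mul_choose_div (p := 3) (n := 3*a+c) (k := 3*b+d)
  have h' := (ZMod.intCast_eq_intCast_iff _ _ 3).mpr h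
  push_cast at h'
  rw [h']
  have h1 : (3*a+c) % 3 = c := by omega
  have h2 : (3*a+c) / 3 = a := by omega
  have h3 : (3*b+d) % 3 = d % 3 := by omega
  have h4 : (3*b+d) / 3 = b + d / 3 := by omega
  have h5 : d % 3 = d := by omega
  have h6 : d / 3 = 0 := by omega
  rw [h1, h2, h3, h4, h5, h6]
  ring

lemma triple_sum (f : ℕ → ZMod 3) (N : ℕ) :
    ∑ m ∈ Finset.range (3*N), f m
      = ∑ s ∈ Finset.range N, (f (3*s) + f (3*s+1) + f (3*s+2)) := by
  induction N with
  | zero => simp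
  | succ N ih =>
    have h3 : 3*(N+1) = 3*N+1+1+1 := by ring
    rw [h3, Finset.sum_range_succ, Finset.sum_range_succ, Finset.sum_range_succ, ih,
      Finset.sum_range_succ]
    ring

lemma Tz_eq : ∀ j, Tz j = (-1:ZMod 3)^j := by
  intro j
  induction j using Nat.strong_induction_on with
  | _ j ih =>
    rcases Nat.eq_zero_or_pos j with hj0 | hj0
    · subst hj0; simp [Tz]
    obtain ⟨q, r, hrlt, hjqr⟩ : ∃ q r, r < 3 ∧ j = 3*q + r :=
      ⟨j / 3, j % 3, by omega, by omega⟩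
    have hqlt : q < j := by omega
    have c2 : (2 : ZMod 3) = -1 := by decide
    have hext : Tz j = ∑ m ∈ Finset.range (3*(q+1)),
        (j.choose m : ZMod 3)^2 * ((2*m).choose j : ZMod 3) := by
      unfold Tz
      refine (Finset.sum_subset (Finset.range_subset_range.mpr (by omega)) ?_)
      intro m _ hm
      rw [Finset.mem_range, not_lt] at hm
      rw [Nat.choose_eq_zero_of_lt (by omega : j < m)]
      push_cast
      ring
    rw [hext, triple_sum]
    have key : ∀ s, ((j.choose (3*s) : ZMod 3)^2 * ((2*(3*s)).choose j : ZMod 3)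
        + (j.choose (3*s+1) : ZMod 3)^2 * ((2*(3*s+1)).choose j : ZMod 3)
        + (j.choose (3*s+2) : ZMod 3)^2 * ((2*(3*s+2)).choose j : ZMod 3))
        = (if r = 1 then 2 else 1) *
          ((q.choose s : ZMod 3)^2 * ((2*s).choose q : ZMod 3)) := by
      intro s
      have e0 : 2*(3*s) = 3*(2*s) + 0 := by ring
      have e1 : 2*(3*s+1) = 3*(2*s) + 2 := by ring
      have e2 : 2*(3*s+2) = 3*(2*s+1) + 1 := by ring
      have l1 : ((3*q+r).choose (3*s) : ZMod 3) = (q.choose s) * (r.choose 0) := by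
        simpa using lucas3 q s r 0 hrlt (by norm_num)
      have l2 : ((3*q+r).choose (3*s+1) : ZMod 3) = (q.choose s) * (r.choose 1) :=
        lucas3 q s r 1 hrlt (by norm_num)
      have l3 : ((3*q+r).choose (3*s+2) : ZMod 3) = (q.choose s) * (r.choose 2) :=
        lucas3 q s r 2 hrlt (by norm_num)
      have l4 : ((3*(2*s)+0).choose (3*q+r) : ZMod 3)
          = ((2*s).choose q) * ((0:ℕ).choose r) := lucas3 (2*s) q 0 r (by norm_num) hrlt
      have l5 : ((3*(2*s)+2).choose (3*q+r) : ZMod 3)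
          = ((2*s).choose q) * ((2:ℕ).choose r) := lucas3 (2*s) q 2 r (by norm_num) hrlt
      have l6 : ((3*(2*s+1)+1).choose (3*q+r) : ZMod 3)
          = ((2*s+1).choose q) * ((1:ℕ).choose r) := lucas3 (2*s+1) q 1 r (by norm_num) hrlt
      rw [hjqr, e0, e1, e2, l1, l2, l3, l4, l5, l6]
      interval_cases r
      · norm_num
      · norm_num
        ring
      · norm_num [c2]
        left
        rw [c2]
        ring
    simp only [key]
    rw [← Finset.mul_sum]
    have hTq : (∑ s ∈ Finset.range (q+1),
        (q.choose s : ZMod 3)^2 * ((2*s).choose q : ZMod 3)) = Tz q := rfl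
    rw [hTq, ih q hqlt]
    have hpow : (-1:ZMod 3)^j = (-1:ZMod 3)^r * (-1:ZMod 3)^q := by
      rw [hjqr, pow_add, pow_mul]
      norm_num [mul_comm]
    rw [hpow]
    interval_cases r
    · norm_num
    · rw [c2]; norm_num
    · norm_num

/-! ### Part 3: assembling the main theorem -/

lemma choose_swap_id (m j : ℕ) (h : m ≤ j) :
    (2*m).choose m * m.choose (j-m) = (2*m).choose j * j.choose m := by
  rcases le_or_gt j (2*m) with h2 | h2
  · have key := Nat.choose_mul (n := 2*m) (k := j) (s := m) h
    have hmm : 2*m - m = m := by omega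
    rw [hmm] at key
    omega
  · rw [Nat.choose_eq_zero_of_lt h2,
      Nat.choose_eq_zero_of_lt (show m < j - m by omega)]
    ring

theorem S_mod_three (n : ℕ) (hn : 0 < n) :
    (∑ m ∈ Finset.range n, ((2*m).choose m : ℤ) *
        ∑ k ∈ Finset.range (m+1), (m.choose k : ℤ) * ((m+k).choose k : ℤ) *
          ((n-1).choose (m+k) : ℤ) * ((n+m+k).choose (m+k) : ℤ)) ≡
      (-1)^(n-1) * n [ZMOD 3] := by
  have cast_mode : ∀ A B : ℤ, ((A : ZMod 3) = (B : ZMod 3)) → A ≡ B [ZMOD 3] := by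
    intro A B h
    have := (ZMod.intCast_eq_intCast_iff A B 3).mp h
    exact_mod_cast this
  refine cast_mode _ _ ?_
  push_cast
  set g : ℕ → ℕ → ZMod 3 := fun m j =>
    ((2*m).choose m : ZMod 3) * (m.choose (j-m) : ZMod 3) * (j.choose m : ZMod 3) *
      ((n-1).choose j : ZMod 3) * ((n+j).choose j : ZMod 3) with hg
  have hrw : ∀ m ∈ Finset.range n,
      ((2*m).choose m : ZMod 3) *
        ∑ k ∈ Finset.range (m+1), (m.choose k : ZMod 3) * ((m+k).choose k : ZMod 3) *
          ((n-1).choose (m+k) : ZMod 3) * ((n+m+k).choose (m+k) : ZMod 3)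
      = ∑ j ∈ Finset.range n, g m j := by
    intro m hm
    rw [Finset.mem_range] at hm
    rw [Finset.mul_sum]
    have h1 : ∀ k ∈ Finset.range (m+1),
        ((2*m).choose m : ZMod 3) * ((m.choose k : ZMod 3) * ((m+k).choose k : ZMod 3) *
          ((n-1).choose (m+k) : ZMod 3) * ((n+m+k).choose (m+k) : ZMod 3))
        = g m (m+k) := by
      intro k _
      rw [hg]
      simp only []
      have e1 : m + k - m = k := by omega
      have e2 : (m+k).choose k = (m+k).choose m := by
        rw [Nat.add_comm m k]
        exact Nat.choose_symm_add
      have e3 : n + m + k = n + (m + k) := by omega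
      rw [e1, e2, e3]
      ring
    rw [Finset.sum_congr rfl h1]
    have h2 : ∑ k ∈ Finset.range (m+1), g m (m+k)
        = ∑ j ∈ Finset.Ico m (2*m+1), g m j := by
      rw [Finset.sum_Ico_eq_sum_range]
      have : 2*m+1-m = m+1 := by omega
      rw [this]
    rw [h2]
    have h3 : ∑ j ∈ Finset.Ico m (2*m+1), g m j
        = ∑ j ∈ Finset.range (2*m+1+n), g m j := by
      refine Finset.sum_subset ?_ ?_
      · intro x hx
        rw [Finset.mem_Ico] at hx
        rw [Finset.mem_range]
        omega
      · intro x hx hx2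
        rw [Finset.mem_range] at hx
        rw [Finset.mem_Ico, not_and_or] at hx2
        rw [hg]; simp only []
        rcases hx2 with hx2 | hx2
        · rw [Nat.choose_eq_zero_of_lt (show x < m by omega)]
          push_cast; ring
        · rw [Nat.choose_eq_zero_of_lt (show m < x - m by omega)]
          push_cast; ring
    have h4 : ∑ j ∈ Finset.range (2*m+1+n), g m j = ∑ j ∈ Finset.range n, g m j := by
      symm
      refine Finset.sum_subset (Finset.range_subset_range.mpr (by omega)) ?_
      intro x hx hx2
      rw [Finset.mem_range, not_lt] at hx2
      rw [hg]; simp only []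
      rw [Nat.choose_eq_zero_of_lt (show n - 1 < x by omega)]
      push_cast; ring
    rw [h3, h4]
  rw [Finset.sum_congr rfl hrw, Finset.sum_comm]
  have inner : ∀ j ∈ Finset.range n,
      ∑ m ∈ Finset.range n, g m j
      = ((n-1).choose j : ZMod 3) * ((n+j).choose j : ZMod 3) * (-1:ZMod 3)^j := by
    intro j hj
    rw [Finset.mem_range] at hj
    have e1 : ∀ m ∈ Finset.range n, g m j
        = (((n-1).choose j : ZMod 3) * ((n+j).choose j : ZMod 3)) *
          ((j.choose m : ZMod 3)^2 * ((2*m).choose j : ZMod 3)) := by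
      intro m _
      rw [hg]; simp only []
      rcases lt_or_ge j m with h | h
      · rw [Nat.choose_eq_zero_of_lt h]
        push_cast; ring
      · have key := choose_swap_id m j h
        have keyz : ((2*m).choose m : ZMod 3) * (m.choose (j-m) : ZMod 3)
            = ((2*m).choose j : ZMod 3) * (j.choose m : ZMod 3) := by
          exact_mod_cast congrArg (fun t : ℕ => (t : ZMod 3)) key
        linear_combination (((n-1).choose j : ZMod 3) * ((n+j).choose j : ZMod 3) *
          (j.choose m : ZMod 3)) * keyz
    rw [Finset.sum_congr rfl e1, ← Finset.mul_sum]
    have e2 : ∑ m ∈ Finset.range n, ((j.choose m : ZMod 3)^2 * ((2*m).choose j : ZMod 3))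
        = Tz j := by
      unfold Tz
      symm
      refine Finset.sum_subset (Finset.range_subset_range.mpr (by omega)) ?_
      intro m _ hm
      rw [Finset.mem_range, not_lt] at hm
      rw [Nat.choose_eq_zero_of_lt (show j < m by omega)]
      push_cast; ring
    rw [e2, Tz_eq]
  rw [Finset.sum_congr rfl inner]
  have h0 := hval (n-1) n n (by omega)
  unfold hS at h0
  rw [show n-1+1 = n from by omega, show n - (n-1) = 1 from by omega,
    Nat.choose_one_right] at h0
  have h1 := congrArg (fun z : ℤ => (z : ZMod 3)) h0
  push_cast at h1
  rw [← h1]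
  refine Finset.sum_congr rfl fun j _ => ?_
  rw [show (n+j).choose j = (n+j).choose n from (Nat.choose_symm_add).symm]
  ring
end

section
/- For every positive integer n not divisible by 3, the Apéry numbers satisfy A_n + A_{n-1} ≡ (-1)^n · 3n (mod 9). -/
private def ch (a b : ℕ) : ZMod 9 := (a.choose b : ZMod 9)

private lemma h9 : (9 : ZMod 9) = 0 := by decide

private lemma two_mul_choose_two (n : ℕ) : 2 * (n+1).choose 2 = (n+1) * n := by
  induction n with
  | zero => rfl
  | succ n ih =>
    rw [show n+1+1 = (n+1)+1 from rfl, Nat.choose_succ_succ (n+1) 1]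
    rw [Nat.mul_add, ih, Nat.choose_one_right]
    ring

private lemma pascal3 (n k : ℕ) :
    (n+3).choose (k+3) = n.choose k + 3 * n.choose (k+1) + 3 * n.choose (k+2) + n.choose (k+3) := by
  rw [show n+3 = (n+2)+1 from rfl, show k+3 = (k+2)+1 from rfl, Nat.choose_succ_succ,
      show n+2 = (n+1)+1 from rfl, show k+2 = (k+1)+1 from rfl, Nat.choose_succ_succ,
      Nat.choose_succ_succ (n+1) (k+1+1), Nat.choose_succ_succ n k,
      Nat.choose_succ_succ n (k+1), Nat.choose_succ_succ n (k+1+1)]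
  ring

-- cast helpers
private lemma ch_pascal (a b : ℕ) : ch (a+1) (b+1) = ch a b + ch a (b+1) := by
  unfold ch
  rw [Nat.choose_succ_succ]
  push_cast
  ring

private lemma ch_zero (a : ℕ) : ch a 0 = 1 := by simp [ch]

private lemma ch_one (a : ℕ) : ch a 1 = (a : ZMod 9) := by simp [ch]

private lemma ch_two (n : ℕ) : ch (n+1) 2 = 5 * ((n:ZMod 9)+1) * n := by
  have h := two_mul_choose_two n
  have h2 : (2 : ZMod 9) * ch (n+1) 2 = ((n:ZMod 9)+1) * n := by
    unfold ch
    rw [show ((2:ZMod 9)) = ((2:ℕ):ZMod 9) by norm_num, ← Nat.cast_mul, h]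
    push_cast; ring
  linear_combination 5 * h2 - ch (n+1) 2 * h9

private lemma ch_small (r k : ℕ) (hr : r < 3) (hk : 3 ≤ k) : ch r k = 0 := by
  simp [ch, Nat.choose_eq_zero_of_lt (by omega : r < k)]


private lemma nine (a : ℕ) : ∀ b : ℕ,
    ch (3*a) (3*b) = ch a b ∧
    ch (3*a) (3*b+1) = 3*((a:ZMod 9)-b) * ch a b ∧
    ch (3*a) (3*b+2) = 3*((a:ZMod 9)-b) * ch a b ∧
    ch (3*a+1) (3*b) = (1+3*(b:ZMod 9)) * ch a b ∧
    ch (3*a+1) (3*b+1) = (1+3*((a:ZMod 9)-b)) * ch a b ∧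
    ch (3*a+1) (3*b+2) = 6*((a:ZMod 9)-b) * ch a b ∧
    ch (3*a+2) (3*b) = ch a b ∧
    ch (3*a+2) (3*b+1) = (2+3*(a:ZMod 9)) * ch a b ∧
    ch (3*a+2) (3*b+2) = ch a b := by
  induction a with
  | zero =>
    intro b
    cases b with
    | zero =>
      refine ⟨?_, ?_, ?_, ?_, ?_, ?_, ?_, ?_, ?_⟩ <;> simp [ch] <;> decide
    | succ b =>
      have hb : ch 0 (b+1) = 0 := by simp [ch]
      refine ⟨?_, ?_, ?_, ?_, ?_, ?_, ?_, ?_, ?_⟩ <;>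
        rw [ch_small _ _ (by omega) (by omega), hb] <;> ring
  | succ a ih =>
    intro b
    cases b with
    | zero =>
      have e1 : (3*(a+1) : ℕ) = 3*a+2+1 := by ring
      have e2 : (3*(a+1)+1 : ℕ) = 3*a+3+1 := by ring
      have e3 : (3*(a+1)+2 : ℕ) = 3*a+4+1 := by ring
      refine ⟨?_, ?_, ?_, ?_, ?_, ?_, ?_, ?_, ?_⟩ <;>
        simp only [Nat.mul_zero, Nat.zero_add, Nat.cast_zero]
      · rw [ch_zero, ch_zero]
      · rw [ch_one, ch_zero]; push_cast
        linear_combination 0 * h9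
      · rw [e1, ch_two, ch_zero]; push_cast
        linear_combination ((5:ZMod 9)*a^2+8*a+3) * h9
      · rw [ch_zero, ch_zero]; norm_num
      · rw [ch_one, ch_zero]; push_cast
        linear_combination 0 * h9
      · rw [e2, ch_two, ch_zero]; push_cast
        linear_combination ((5:ZMod 9)*a^2+11*a+6) * h9
      · rw [ch_zero, ch_zero]
      · rw [ch_one, ch_zero]; push_cast
        linear_combination 0 * h9
      · rw [e3, ch_two, ch_zero]; push_cast
        linear_combination ((5:ZMod 9)*a^2+15*a+11) * h9
    | succ b =>
      obtain ⟨h00, h01, h02, h10, h11, h12, h20, h21, h22⟩ := ih b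
      obtain ⟨g00, g01, g02, g10, g11, g12, g20, g21, g22⟩ := ih (b+1)
      have P : ∀ r s : ℕ, ch (3*(a+1)+r) (3*(b+1)+s) =
          ch (3*a+r) (3*b+s) + 3 * ch (3*a+r) (3*b+s+1)
            + 3 * ch (3*a+r) (3*b+s+2) + ch (3*a+r) (3*b+s+3) := by
        intro r s
        unfold ch
        rw [show 3*(a+1)+r = (3*a+r)+3 by ring, show 3*(b+1)+s = (3*b+s)+3 by ring, pascal3]
        push_cast
        ring
      have i1 : (3*b+1+1 : ℕ) = 3*b+2 := by ring
      have i2 : (3*b+1+2 : ℕ) = 3*(b+1) := by ring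
      have i3 : (3*b+1+3 : ℕ) = 3*(b+1)+1 := by ring
      have j1 : (3*b+2+1 : ℕ) = 3*(b+1) := by ring
      have j2 : (3*b+2+2 : ℕ) = 3*(b+1)+1 := by ring
      have j3 : (3*b+2+3 : ℕ) = 3*(b+1)+2 := by ring
      have k1 : (3*b+0+1 : ℕ) = 3*b+1 := by ring
      have k2 : (3*b+0+2 : ℕ) = 3*b+2 := by ring
      have k3 : (3*b+0+3 : ℕ) = 3*(b+1) := by ring
      have z0 : (3*a+0 : ℕ) = 3*a := by ring
      have z0' : (3*b+0 : ℕ) = 3*b := by ring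
      refine ⟨?_, ?_, ?_, ?_, ?_, ?_, ?_, ?_, ?_⟩
      · have := P 0 0; rw [z0, z0', k1, k2, k3] at this
        rw [show (3*(a+1) : ℕ) = 3*(a+1)+0 by ring, show (3*(b+1) : ℕ) = 3*(b+1)+0 by ring,
            this, h00, h01, h02, g00, ch_pascal]
        push_cast
        linear_combination (2*((a:ZMod 9)-b) * ch a b) * h9
      · have := P 0 1; rw [z0, i1, i2, i3, show (3*(a+1)+0 : ℕ) = 3*(a+1) by ring] at this
        rw [this, h01, h02, g00, g01, ch_pascal]
        push_cast
        linear_combination (((a:ZMod 9)-b) * ch a b) * h9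
      · have := P 0 2; rw [z0, j1, j2, j3, show (3*(a+1)+0 : ℕ) = 3*(a+1) by ring] at this
        rw [this, h02, g00, g01, g02, ch_pascal]
        push_cast
        linear_combination (((a:ZMod 9)-b-1) * ch a (b+1)) * h9
      · have := P 1 0; rw [z0', k1, k2, k3] at this
        rw [show (3*(b+1) : ℕ) = 3*(b+1)+0 by ring, this, h10, h11, h12, g10, ch_pascal]
        push_cast
        linear_combination (3*((a:ZMod 9)-b) * ch a b) * h9
      · have := P 1 1; rw [i1, i2, i3] at this
        rw [this, h11, h12, g10, g11, ch_pascal]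
        push_cast
        linear_combination (2*((a:ZMod 9)-b) * ch a b + ((b:ZMod 9)+1) * ch a (b+1)) * h9
      · have := P 1 2; rw [j1, j2, j3] at this
        rw [this, h12, g10, g11, g12, ch_pascal]
        push_cast
        linear_combination ((a:ZMod 9) * ch a (b+1)) * h9
      · have := P 2 0; rw [z0', k1, k2, k3] at this
        rw [show (3*(b+1) : ℕ) = 3*(b+1)+0 by ring, this, h20, h21, h22, g20, ch_pascal]
        push_cast
        linear_combination (((a:ZMod 9)+1) * ch a b) * h9
      · have := P 2 1; rw [i1, i2, i3] at this
        rw [this, h21, h22, g20, g21, ch_pascal]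
        push_cast
        linear_combination 0 * h9
      · have := P 2 2; rw [j1, j2, j3] at this
        rw [this, h22, g20, g21, g22, ch_pascal]
        push_cast
        linear_combination (((a:ZMod 9)+1) * ch a (b+1)) * h9

private lemma perb0 (m b : ℕ) :
    ch (3*m) (3*b)^2 * ch (3*m + 3*b) (3*b)^2
      + ch (3*m) (3*b+1)^2 * ch (3*m + (3*b+1)) (3*b+1)^2
      + ch (3*m) (3*b+2)^2 * ch (3*m + (3*b+2)) (3*b+2)^2
      = ch m b^2 * ch (m+b) b^2 := by
  rw [show 3*m + 3*b = 3*(m+b) by ring, show 3*m + (3*b+1) = 3*(m+b)+1 by ring,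
      show 3*m + (3*b+2) = 3*(m+b)+2 by ring,
      (nine m b).1, (nine m b).2.1, (nine m b).2.2.1,
      (nine (m+b) b).1, (nine (m+b) b).2.2.2.2.1, (nine (m+b) b).2.2.2.2.2.2.2.2]
  push_cast
  set A := (m : ZMod 9)
  set B := (b : ZMod 9)
  set X := ch m b
  set Y := ch (m+b) b
  linear_combination (2*B^2*X^2*Y^2 - 4*A*B*X^2*Y^2 + 6*A*B^2*X^2*Y^2 + 2*A^2*X^2*Y^2
    - 12*A^2*B*X^2*Y^2 + 9*A^2*B^2*X^2*Y^2 + 6*A^3*X^2*Y^2 - 18*A^3*B*X^2*Y^2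
    + 9*A^4*X^2*Y^2) * h9

private lemma perb1 (m b : ℕ) :
    ch (3*m+1) (3*b)^2 * ch (3*m+1 + 3*b) (3*b)^2
      + ch (3*m+1) (3*b+1)^2 * ch (3*m+1 + (3*b+1)) (3*b+1)^2
      + ch (3*m+1) (3*b+2)^2 * ch (3*m+1 + (3*b+2)) (3*b+2)^2
      = 5 * (ch m b^2 * ch (m+b) b^2) := by
  rw [show 3*m+1 + 3*b = 3*(m+b)+1 by ring, show 3*m+1 + (3*b+1) = 3*(m+b)+2 by ring,
      show 3*m+1 + (3*b+2) = 3*(m+b+1) by ring,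
      (nine m b).2.2.2.1, (nine m b).2.2.2.2.1, (nine m b).2.2.2.2.2.1,
      (nine (m+b) b).2.2.2.1, (nine (m+b) b).2.2.2.2.2.2.2.1, (nine (m+b+1) b).2.2.1]
  push_cast
  set A := (m : ZMod 9)
  set B := (b : ZMod 9)
  set X := ch m b
  set Y := ch (m+b) b
  set Z := ch (m+b+1) b
  linear_combination (36*B^2*X^2*Z^2 + 3*B^2*X^2*Y^2 + 18*B^3*X^2*Y^2 + 18*B^4*X^2*Y^2
    + 4*A*X^2*Y^2 - 72*A*B*X^2*Z^2 - 6*A*B*X^2*Y^2 + 72*A*B^2*X^2*Z^2 - 18*A*B^2*X^2*Y^2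
    + 36*A^2*X^2*Z^2 + 13*A^2*X^2*Y^2 - 144*A^2*B*X^2*Z^2 - 6*A^2*B*X^2*Y^2
    + 36*A^2*B^2*X^2*Z^2 - 18*A^2*B^2*X^2*Y^2 + 72*A^3*X^2*Z^2 + 18*A^3*X^2*Y^2
    - 72*A^3*B*X^2*Z^2 + 36*A^4*X^2*Z^2 + 9*A^4*X^2*Y^2) * h9

private lemma perb2 (m b : ℕ) :
    ch (3*m+2) (3*b)^2 * ch (3*m+2 + 3*b) (3*b)^2
      + ch (3*m+2) (3*b+1)^2 * ch (3*m+2 + (3*b+1)) (3*b+1)^2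
      + ch (3*m+2) (3*b+2)^2 * ch (3*m+2 + (3*b+2)) (3*b+2)^2
      = ch m b^2 * ch (m+b) b^2 := by
  rw [show 3*m+2 + 3*b = 3*(m+b)+2 by ring, show 3*m+2 + (3*b+1) = 3*(m+b+1) by ring,
      show 3*m+2 + (3*b+2) = 3*(m+b+1)+1 by ring,
      (nine m b).2.2.2.2.2.2.1, (nine m b).2.2.2.2.2.2.2.1, (nine m b).2.2.2.2.2.2.2.2,
      (nine (m+b) b).2.2.2.2.2.2.1, (nine (m+b+1) b).2.1, (nine (m+b+1) b).2.2.2.2.2.1]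
  push_cast
  set A := (m : ZMod 9)
  set X := ch m b
  set Z := ch (m+b+1) b
  linear_combination (8*X^2*Z^2 + 28*A*X^2*Z^2 + 41*A^2*X^2*Z^2 + 30*A^3*X^2*Z^2
    + 9*A^4*X^2*Z^2) * h9

private lemma apery_cast9 (n N : ℕ) (h : n + 1 ≤ N) :
    ((apery n : ℤ) : ZMod 9) = ∑ k ∈ Finset.range N, ch n k^2 * ch (n+k) k^2 := by
  have e : ((apery n : ℤ) : ZMod 9) = ∑ k ∈ Finset.range (n+1), ch n k^2 * ch (n+k) k^2 := by
    unfold apery ch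
    push_cast
    rfl
  rw [e]
  apply Finset.sum_subset (Finset.range_subset_range.2 h)
  intro k hk hnk
  have hlt : n < k := by
    simp only [Finset.mem_range] at hk hnk
    omega
  simp [ch, Nat.choose_eq_zero_of_lt hlt]

private lemma sum_group (f : ℕ → ZMod 9) (n : ℕ) :
    ∑ k ∈ Finset.range (3*n), f k
      = ∑ b ∈ Finset.range n, (f (3*b) + f (3*b+1) + f (3*b+2)) := by
  induction n with
  | zero => simp
  | succ n ih =>
    rw [show 3*(n+1) = (3*n+2)+1 by ring, Finset.sum_range_succ,
        show (3*n+2 : ℕ) = (3*n+1)+1 by ring, Finset.sum_range_succ,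
        Finset.sum_range_succ, ih, Finset.sum_range_succ]
    ring

private lemma rec9 (m : ℕ) :
    ((apery (3*m) : ℤ) : ZMod 9) = ((apery m : ℤ) : ZMod 9) ∧
    ((apery (3*m+1) : ℤ) : ZMod 9) = 5 * ((apery m : ℤ) : ZMod 9) ∧
    ((apery (3*m+2) : ℤ) : ZMod 9) = ((apery m : ℤ) : ZMod 9) := by
  have hA : ((apery m : ℤ) : ZMod 9) = ∑ b ∈ Finset.range (m+1), ch m b^2 * ch (m+b) b^2 :=
    apery_cast9 m (m+1) le_rfl
  refine ⟨?_, ?_, ?_⟩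
  · rw [apery_cast9 (3*m) (3*(m+1)) (by omega), sum_group, hA]
    exact Finset.sum_congr rfl fun b _ => perb0 m b
  · rw [apery_cast9 (3*m+1) (3*(m+1)) (by omega), sum_group, hA, Finset.mul_sum]
    exact Finset.sum_congr rfl fun b _ => perb1 m b
  · rw [apery_cast9 (3*m+2) (3*(m+1)) (by omega), sum_group, hA]
    exact Finset.sum_congr rfl fun b _ => perb2 m b

private def phi : ZMod 9 →+* ZMod 3 := ZMod.castHom (show (3:ℕ) ∣ 9 by norm_num) (ZMod 3)

private lemma cast39 (x : ℤ) : phi ((x : ZMod 9)) = (x : ZMod 3) := map_intCast phi x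

private lemma mod3 (m : ℕ) : ((apery m : ℤ) : ZMod 3) = (-1)^m := by
  induction m using Nat.strong_induction_on with
  | _ m ih =>
    rcases Nat.eq_zero_or_pos m with h0 | h0
    · subst h0
      norm_num [apery]
    · set q := m / 3 with hq
      have hlt : q < m := by omega
      have hrec := rec9 q
      have hq3 : ((apery q : ℤ) : ZMod 3) = (-1)^q := ih q hlt
      have hneg : ((-1 : ZMod 3))^(3*q) = (-1)^q := by
        rw [pow_mul]
        norm_num
      have hr : m % 3 = 0 ∨ m % 3 = 1 ∨ m % 3 = 2 := by omega
      rcases hr with h | h | h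
      · rw [show m = 3*q by omega, ← cast39, hrec.1, cast39, hq3, hneg]
      · rw [show m = 3*q+1 by omega, ← cast39, hrec.2.1, map_mul, cast39, hq3,
            pow_succ, hneg, show phi 5 = -1 from by
              have h5 := cast39 5
              push_cast at h5
              rw [h5]
              decide]
        ring
      · rw [show m = 3*q+2 by omega, ← cast39, hrec.2.2, cast39, hq3, pow_add, hneg]
        norm_num

theorem apery_add_mod_nine (n : ℕ) (hn : 0 < n) (h3 : ¬ 3 ∣ n) :
    apery n + apery (n-1) ≡ (-1)^n * 3 * n [ZMOD 9] := by
  suffices h : ((apery n + apery (n-1) : ℤ) : ZMod 9) = (((-1)^n * 3 * n : ℤ) : ZMod 9) by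
    have := (ZMod.intCast_eq_intCast_iff _ _ 9).mp h
    exact_mod_cast this
  have key : ∀ m : ℕ, ∃ t : ℤ, apery m = (-1)^m + 3*t := by
    intro m
    have h1 : ((apery m : ℤ) : ZMod 3) = (((-1)^m : ℤ) : ZMod 3) := by
      rw [mod3 m]
      push_cast
      ring
    have h2 := (ZMod.intCast_eq_intCast_iff (apery m) ((-1)^m) 3).mp h1
    obtain ⟨t, ht⟩ := h2.symm.dvd
    push_cast at ht
    exact ⟨t, by linarith⟩
  set q := n / 3 with hq
  have hr : n % 3 = 1 ∨ n % 3 = 2 := by omega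
  obtain ⟨t, ht⟩ := key q
  have hc : ((apery q : ℤ) : ZMod 9) = (-1)^q + 3*(t : ZMod 9) := by
    rw [ht]
    push_cast
    ring
  rcases hr with h | h
  · have hn2 : n - 1 = 3*q := by omega
    have hn1 : n = 3*q + 1 := by omega
    rw [hn2, hn1]
    push_cast
    rw [(rec9 q).2.1, (rec9 q).1, hc]
    have hpow : ((-1 : ZMod 9))^(3*q+1) = -((-1)^q) := by
      rw [pow_succ, pow_mul]
      norm_num
    rw [hpow]
    set E := ((-1 : ZMod 9))^q
    set T := (t : ZMod 9)
    set Q := (q : ZMod 9)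
    linear_combination (E + 2*T + Q*E) * h9
  · have hn2 : n - 1 = 3*q + 1 := by omega
    have hn1 : n = 3*q + 2 := by omega
    rw [hn2, hn1]
    push_cast
    rw [(rec9 q).2.2, (rec9 q).2.1, hc]
    have hpow : ((-1 : ZMod 9))^(3*q+2) = (-1)^q := by
      rw [pow_add, pow_mul]
      norm_num
    rw [hpow]
    set E := ((-1 : ZMod 9))^q
    set T := (t : ZMod 9)
    set Q := (q : ZMod 9)
    linear_combination (2*T - Q*E) * h9
end

section
/- For every odd positive integer n, the Apéry numbers satisfy A_n - A_{n-1} ≡ 4·(-1)^{(n-1)/2} (mod 16). -/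
open Finset Nat

/-- product of first n odd numbers -/
def dfac (n : ℕ) : ℕ := ∏ i ∈ Finset.range n, (2*i+1)

lemma dfac_succ (n : ℕ) : dfac (n+1) = dfac n * (2*n+1) := Finset.prod_range_succ _ _

lemma dfac_odd (n : ℕ) : ¬ 2 ∣ dfac n := by
  induction n with
  | zero => simp [dfac]
  | succ n ih =>
    rw [dfac_succ]
    intro h
    rcases (Nat.prime_two.dvd_mul.mp h) with h | h
    · exact ih h
    · omega

lemma two_mul_factorial (n : ℕ) : (2*n)! = 2^n * n ! * dfac n := by
  induction n with
  | zero => simp [dfac]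
  | succ n ih =>
    have h : 2*(n+1) = (2*n+1) + 1 := by ring
    rw [h, Nat.factorial_succ, show 2*n+1 = (2*n)+1 from rfl, Nat.factorial_succ, ih,
      dfac_succ, Nat.factorial_succ]
    ring

/-- I1 : doubling identity -/
lemma key1 (b c : ℕ) :
    (2*(b+c)).choose (2*b) * (dfac b * dfac c) = (b+c).choose b * dfac (b+c) := by
  have hb : 2*b ≤ 2*(b+c) := by omega
  have h1 := Nat.choose_mul_factorial_mul_factorial hb
  have h2 := Nat.choose_mul_factorial_mul_factorial (Nat.le_add_right b c)
  rw [show 2*(b+c) - 2*b = 2*c by omega] at h1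
  rw [show b + c - b = c by omega] at h2
  have hpos : 0 < 2^(b+c) * (b ! * c !) := by positivity
  apply Nat.eq_of_mul_eq_mul_right hpos
  calc (2*(b+c)).choose (2*b) * (dfac b * dfac c) * (2^(b+c) * (b ! * c !))
      = ((2*(b+c)).choose (2*b)) * ((2^b * b ! * dfac b) * (2^c * c ! * dfac c)) := by
        rw [pow_add]; ring
    _ = ((2*(b+c)).choose (2*b)) * ((2*b)! * (2*c)!) := by
        rw [two_mul_factorial, two_mul_factorial]
    _ = (2*(b+c))! := by rw [← h1]; ring
    _ = 2^(b+c) * (b+c)! * dfac (b+c) := two_mul_factorial _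
    _ = ((b+c).choose b * b ! * c !) * 2^(b+c) * dfac (b+c) := by rw [h2]; ring
    _ = (b+c).choose b * dfac (b+c) * (2^(b+c) * (b ! * c !)) := by ring

/-- I2 : odd-top identity -/
lemma key2 (b c : ℕ) :
    (2*(b+c)+1).choose (2*b) * (2*c+1) = (2*(b+c)).choose (2*b) * (2*(b+c)+1) := by
  have hb : 2*b ≤ 2*(b+c)+1 := by omega
  have hb' : 2*b ≤ 2*(b+c) := by omega
  have h1 := Nat.choose_mul_factorial_mul_factorial hb
  have h2 := Nat.choose_mul_factorial_mul_factorial hb'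
  rw [show 2*(b+c)+1 - 2*b = 2*c+1 by omega] at h1
  rw [show 2*(b+c) - 2*b = 2*c by omega] at h2
  have hpos : 0 < (2*b)! * (2*c)! := by positivity
  apply Nat.eq_of_mul_eq_mul_right hpos
  calc (2*(b+c)+1).choose (2*b) * (2*c+1) * ((2*b)! * (2*c)!)
      = (2*(b+c)+1).choose (2*b) * (2*b)! * ((2*c+1) * (2*c)!) := by ring
    _ = (2*(b+c)+1).choose (2*b) * (2*b)! * (2*c+1)! := by
        rw [show (2*c+1)! = (2*c+1) * (2*c)! from Nat.factorial_succ _]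
    _ = (2*(b+c)+1)! := h1
    _ = (2*(b+c)+1) * (2*(b+c))! := Nat.factorial_succ _
    _ = (2*(b+c)+1) * ((2*(b+c)).choose (2*b) * (2*b)! * (2*c)!) := by rw [h2]
    _ = (2*(b+c)).choose (2*b) * (2*(b+c)+1) * ((2*b)! * (2*c)!) := by ring

/-- I0 : chain identity -/
lemma key0 (n k : ℕ) (h : k ≤ n) :
    n.choose k * (n+k).choose k = (n+k).choose (2*k) * (2*k).choose k := by
  have h1 := Nat.choose_mul_factorial_mul_factorial (show k ≤ n + k by omega)
  have h2 := Nat.choose_mul_factorial_mul_factorial (show k ≤ n from h)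
  have h3 := Nat.choose_mul_factorial_mul_factorial (show 2*k ≤ n + k by omega)
  have h4 := Nat.choose_mul_factorial_mul_factorial (show k ≤ 2*k by omega)
  rw [show n + k - k = n by omega] at h1
  rw [show n + k - 2*k = n - k by omega] at h3
  rw [show 2*k - k = k by omega] at h4
  have hpos : 0 < k ! * (k ! * (n-k)!) := by positivity
  apply Nat.eq_of_mul_eq_mul_right hpos
  calc n.choose k * (n+k).choose k * (k ! * (k ! * (n-k)!))
      = (n+k).choose k * k ! * (n.choose k * k ! * (n-k)!) := by ring
    _ = (n+k).choose k * k ! * n ! := by rw [h2]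
    _ = (n+k)! := h1
    _ = (n+k).choose (2*k) * (2*k)! * (n-k)! := h3.symm
    _ = (n+k).choose (2*k) * ((2*k).choose k * k ! * k !) * (n-k)! := by rw [h4]
    _ = (n+k).choose (2*k) * (2*k).choose k * (k ! * (k ! * (n-k)!)) := by ring

/-- Q : even top, odd bottom gives even binomial -/
lemma even_choose_odd (u v : ℕ) : 2 ∣ (2*u).choose (2*v+1) := by
  rcases u with _ | w
  · rw [Nat.choose_eq_zero_of_lt (by omega)]; exact dvd_zero 2
  · have h := Nat.add_one_mul_choose_eq (2*w+1) (2*v)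
    have h2 : 2 ∣ (2*(w+1)).choose (2*v+1) * (2*v+1) := by
      rw [show 2*(w+1) = (2*w+1)+1 by omega, show 2*v+1 = (2*v)+1 from rfl, ← h]
      exact ⟨(w+1) * ((2*w+1).choose (2*v)), by ring⟩
    rcases Nat.prime_two.dvd_mul.mp h2 with h3 | h3
    · exact h3
    · omega

/-- P : doubling preserves evenness -/
lemma even_doubling (b c : ℕ) (h : 2 ∣ (b+c).choose b) : 2 ∣ (2*(b+c)).choose (2*b) := by
  have hk := key1 b c
  have h2 : 2 ∣ (2*(b+c)).choose (2*b) * (dfac b * dfac c) := by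
    rw [hk]; exact Dvd.dvd.mul_right h _
  rcases Nat.prime_two.dvd_mul.mp h2 with h3 | h3
  · exact h3
  · rcases Nat.prime_two.dvd_mul.mp h3 with h4 | h4
    · exact absurd h4 (dfac_odd b)
    · exact absurd h4 (dfac_odd c)

/-- central binomial halving -/
lemma central (s : ℕ) : (2*(s+1)).choose (s+1) = 2 * ((2*s+1).choose s) := by
  have h1 : (2*(s+1)).choose (s+1) = (2*s+1).choose s + (2*s+1).choose (s+1) := by
    rw [show 2*(s+1) = (2*s+1)+1 by omega]
    exact Nat.choose_succ_succ' (2*s+1) s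
  have h2 : (2*s+1).choose (s+1) = (2*s+1).choose s := by
    have := Nat.choose_symm (show s+1 ≤ 2*s+1 by omega)
    rw [show 2*s+1 - (s+1) = s by omega] at this
    exact this.symm
  omega

lemma two_dvd_central (t : ℕ) (ht : 1 ≤ t) : 2 ∣ (2*t).choose t := by
  rcases t with _ | s
  · omega
  · rw [central s]; exact ⟨_, rfl⟩

lemma four_dvd (t : ℕ) (ht : 1 ≤ t) : 4 ∣ (2*(2*t+1)).choose (2*t+1) := by
  have hc : (2*(2*t+1)).choose (2*t+1) = 2 * ((2*(2*t)+1).choose (2*t)) := by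
    have := central (2*t)
    rw [show 2*t+1 = (2*t)+1 from rfl]
    rw [this]
  have h2 : 2 ∣ (2*(2*t)+1).choose (2*t) := by
    have hk := key2 t t
    rw [show t + t = 2*t by omega] at hk
    have hev : 2 ∣ (2*(2*t)).choose (2*t) := by
      have := even_doubling t t (by rw [show t+t = 2*t by omega]; exact two_dvd_central t ht)
      rwa [show t+t = 2*t by omega] at this
    have h3 : 2 ∣ (2*(2*t)+1).choose (2*t) * (2*t+1) := by
      rw [hk]; exact Dvd.dvd.mul_right hev _
    rcases Nat.prime_two.dvd_mul.mp h3 with h4 | h4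
    · exact h4
    · omega
  rw [hc]
  obtain ⟨q, hq⟩ := h2
  exact ⟨q, by omega⟩

/-- L3 : odd k ≥ 3 terms divisible by 16 -/
lemma sixteen_dvd_odd (n t : ℕ) (ht : 1 ≤ t) :
    16 ∣ (n.choose (2*t+1))^2 * ((n + (2*t+1)).choose (2*t+1))^2 := by
  set k := 2*t+1 with hk
  by_cases h : k ≤ n
  · have h0 := key0 n k h
    have h4 := four_dvd t ht
    obtain ⟨q, hq⟩ := h4
    have : (n.choose k)^2 * ((n+k).choose k)^2 = ((n+k).choose (2*k))^2 * ((2*k).choose k)^2 := by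
      have := congrArg (fun x => x^2) h0
      simpa [mul_pow] using this
    rw [this, hq]
    exact ⟨((n+k).choose (2*k))^2 * q^2, by ring⟩
  · rw [Nat.choose_eq_zero_of_lt (by omega)]
    simp

lemma unit_odd (x : ℕ) : IsUnit ((2*x+1 : ℕ) : ZMod 16) := by
  rw [ZMod.isUnit_iff_coprime]
  have h2 : Nat.Coprime (2*x+1) 2 := by
    rw [Nat.coprime_comm, Nat.Prime.coprime_iff_not_dvd Nat.prime_two]
    omega
  have : Nat.Coprime (2*x+1) (2^4) := h2.pow_right 4
  simpa using this

lemma h16zero : (16 : ZMod 16) = 0 := by decide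

/-- main even-k per-term congruence -/
lemma evenk (m j : ℕ) (hj : j ≤ m) :
    ((2*m+1).choose (2*j) : ZMod 16)^2 * (((2*m+1)+(2*j)).choose (2*j) : ZMod 16)^2
      = ((2*m).choose (2*j) : ZMod 16)^2 * (((2*m)+(2*j)).choose (2*j) : ZMod 16)^2 := by
  obtain ⟨c, hc⟩ : ∃ c, m = j + c := ⟨m - j, by omega⟩
  have inst1 := key2 j c
  rw [← hc] at inst1
  have inst2 := key2 j m
  -- inst1 : (2*m+1).choose (2*j) * (2*c+1) = (2*m).choose (2*j) * (2*m+1)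
  -- inst2 : (2*(j+m)+1).choose (2*j) * (2*m+1) = (2*(j+m)).choose (2*j) * (2*(j+m)+1)
  have E : ((2*m+1).choose (2*j) * (2*c+1))^2 * ((2*(j+m)+1).choose (2*j) * (2*m+1))^2
      = ((2*m).choose (2*j) * (2*m+1))^2 * ((2*(j+m)).choose (2*j) * (2*(j+m)+1))^2 := by
    rw [inst1, inst2]
  -- cast to ZMod 16
  have E' : (((2*m+1).choose (2*j) : ZMod 16) * ((2*c+1 : ℕ) : ZMod 16))^2
      * (((2*(j+m)+1).choose (2*j) : ZMod 16) * ((2*m+1 : ℕ) : ZMod 16))^2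
      = (((2*m).choose (2*j) : ZMod 16) * ((2*m+1 : ℕ) : ZMod 16))^2
      * (((2*(j+m)).choose (2*j) : ZMod 16) * ((2*(j+m)+1 : ℕ) : ZMod 16))^2 := by
    exact_mod_cast congrArg (Nat.cast : ℕ → ZMod 16) E
  set a1 : ZMod 16 := ((2*m+1).choose (2*j) : ZMod 16)
  set a2 : ZMod 16 := ((2*(j+m)+1).choose (2*j) : ZMod 16)
  set b1 : ZMod 16 := ((2*m).choose (2*j) : ZMod 16)
  set b2 : ZMod 16 := ((2*(j+m)).choose (2*j) : ZMod 16)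
  set x : ZMod 16 := ((2*c+1 : ℕ) : ZMod 16)
  set u : ZMod 16 := ((2*m+1 : ℕ) : ZMod 16)
  set y : ZMod 16 := ((2*(j+m)+1 : ℕ) : ZMod 16)
  have hu : IsUnit u := unit_odd m
  have hx : IsUnit x := unit_odd c
  -- cancel u^2
  have E2 : (a1^2 * a2^2) * x^2 = (b1^2 * b2^2) * y^2 := by
    have h : ((a1^2 * a2^2) * x^2) * u^2 = ((b1^2 * b2^2) * y^2) * u^2 := by
      linear_combination E'
    exact (hu.pow 2).mul_right_cancel h
  -- goal shape
  have goal_eq : ((2*m+1)+(2*j) : ℕ) = (2*(j+m)+1 : ℕ) := by omega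
  have goal_eq2 : ((2*m)+(2*j) : ℕ) = (2*(j+m) : ℕ) := by omega
  rw [goal_eq, goal_eq2]
  show a1^2 * a2^2 = b1^2 * b2^2
  rcases Nat.even_or_odd j with ⟨i, hi⟩ | ⟨i, hi⟩
  · -- j even : y^2 = x^2
    have hyx : y^2 = x^2 := by
      have hynat : (2*(j+m)+1 : ℕ) = (2*c+1) + 8*i := by omega
      show (((2*(j+m)+1 : ℕ) : ZMod 16))^2 = (((2*c+1 : ℕ) : ZMod 16))^2
      rw [hynat]
      push_cast
      linear_combination ((i:ZMod 16)*(2*(c:ZMod 16)+1) + 4*(i:ZMod 16)^2) * h16zero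
    rw [hyx] at E2
    exact (hx.pow 2).mul_right_cancel E2
  · -- j odd : y^2 = x^2 + 8*x  and 8 * b1^2*b2^2 = 0
    have hyx : y^2 = x^2 + 8*x := by
      have hynat : (2*(j+m)+1 : ℕ) = (2*c+1) + (8*i+4) := by omega
      show (((2*(j+m)+1 : ℕ) : ZMod 16))^2 = (((2*c+1 : ℕ) : ZMod 16))^2 + 8*(((2*c+1 : ℕ) : ZMod 16))
      rw [hynat]
      push_cast
      linear_combination ((i:ZMod 16)*(2*(c:ZMod 16)+1) + 4*(i:ZMod 16)^2 + 4*(i:ZMod 16) + 1) * h16zero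
    have hev : 2 ∣ (2*m).choose (2*j) * ((2*(j+m)).choose (2*j)) := by
      rcases Nat.even_or_odd m with ⟨v, hv⟩ | ⟨v, hv⟩
      · -- m even : 2 ∣ C(2m, 2j)
        have h1 : 2 ∣ m.choose j := by
          have := even_choose_odd v i
          rw [show 2*v = m by omega, show 2*i+1 = j by omega] at this
          exact this
        have h2 : 2 ∣ (2*m).choose (2*j) := by
          have := even_doubling j c (by rw [← hc]; exact h1)
          rwa [← hc] at this
        exact h2.mul_right _
      · -- m odd : 2 ∣ C(2(j+m), 2j)
        have h1 : 2 ∣ (j+m).choose j := by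
          have := even_choose_odd (i+v+1) i
          rw [show 2*(i+v+1) = j+m by omega, show 2*i+1 = j by omega] at this
          exact this
        have h2 : 2 ∣ (2*(j+m)).choose (2*j) := even_doubling j m h1
        exact Dvd.dvd.mul_left h2 _
    obtain ⟨q, hq⟩ := hev
    have hb : b1 * b2 = 2 * (q : ZMod 16) := by
      have := congrArg (Nat.cast : ℕ → ZMod 16) hq
      push_cast at this
      exact this
    have h8 : 8 * (b1^2 * b2^2) = 0 := by
      have : b1^2 * b2^2 = (b1*b2)^2 := by ring
      rw [this, hb]
      linear_combination (2*(q:ZMod 16)^2) * h16zero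
    rw [hyx] at E2
    have E3 : (a1^2 * a2^2) * x^2 = (b1^2 * b2^2) * x^2 := by
      linear_combination E2 + x * h8
    exact (hx.pow 2).mul_right_cancel E3

/-- the term as a ZMod 16 value -/
noncomputable def f16 (N k : ℕ) : ZMod 16 := (N.choose k : ZMod 16)^2 * ((N+k).choose k : ZMod 16)^2

lemma apery_cast (N : ℕ) : ((apery N : ℤ) : ZMod 16) = ∑ k ∈ Finset.range (N+1), f16 N k := by
  simp only [apery, Int.cast_sum, Int.cast_mul, Int.cast_pow, Int.cast_natCast, f16]

lemma f16_odd_zero (N t : ℕ) (ht : 1 ≤ t) : f16 N (2*t+1) = 0 := by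
  obtain ⟨q, hq⟩ := sixteen_dvd_odd N t ht
  have : ((N.choose (2*t+1))^2 * ((N + (2*t+1)).choose (2*t+1))^2 : ℕ) = 16 * q := hq
  have h := congrArg (Nat.cast : ℕ → ZMod 16) this
  push_cast at h
  rw [f16]
  rw [h, h16zero]
  ring

theorem apery_sub_mod_sixteen (n : ℕ) (hn : 0 < n) (hodd : Odd n) :
    apery n - apery (n-1) ≡ 4 * (-1)^((n-1)/2) [ZMOD 16] := by
  obtain ⟨m, hm⟩ := hodd
  subst hm
  rw [show (2*m+1-1)/2 = m by omega, show 2*m+1-1 = 2*m by omega]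
  rcases Nat.eq_zero_or_pos m with rfl | hpos
  · norm_num [apery, Finset.sum_range_succ]
  -- reduce to ZMod 16
  have main : ((apery (2*m+1) - apery (2*m) : ℤ) : ZMod 16) = ((4 * (-1)^m : ℤ) : ZMod 16) := by
    rw [Int.cast_sub, apery_cast, apery_cast]
    rw [show 2*m+1+1 = (2*m+1)+1 from rfl, Finset.sum_range_succ]
    have hlast : f16 (2*m+1) (2*m+1) = 0 := f16_odd_zero (2*m+1) m hpos
    rw [hlast, add_zero, ← Finset.sum_sub_distrib]
    have hsum : ∑ k ∈ Finset.range (2*m+1), (f16 (2*m+1) k - f16 (2*m) k)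
        = f16 (2*m+1) 1 - f16 (2*m) 1 := by
      apply Finset.sum_eq_single_of_mem 1 (Finset.mem_range.mpr (by omega))
      intro k hk hne
      rcases Nat.even_or_odd k with ⟨j, hj⟩ | ⟨t, htt⟩
      · -- k = 2j even
        have hk2 : k = 2*j := by omega
        have hjm : j ≤ m := by
          have := Finset.mem_range.mp hk
          omega
        rw [hk2]
        have := evenk m j hjm
        rw [f16, f16]
        rw [this]
        ring
      · -- k odd, k ≠ 1 so t ≥ 1
        have hk2 : k = 2*t+1 := by omega
        have ht1 : 1 ≤ t := by omega
        rw [hk2, f16_odd_zero _ t ht1, f16_odd_zero _ t ht1, sub_zero]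
    rw [hsum]
    -- compute the k = 1 terms
    have e1 : f16 (2*m+1) 1 = ((2*m+1 : ℕ) : ZMod 16)^2 * ((2*m+2 : ℕ) : ZMod 16)^2 := by
      rw [f16, Nat.choose_one_right, show 2*m+1+1 = 2*m+2 from rfl, Nat.choose_one_right]
    have e0 : f16 (2*m) 1 = ((2*m : ℕ) : ZMod 16)^2 * ((2*m+1 : ℕ) : ZMod 16)^2 := by
      rw [f16, Nat.choose_one_right, Nat.choose_one_right]
    rw [e1, e0]
    rcases Nat.even_or_odd m with ⟨u, hu⟩ | ⟨u, hu⟩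
    · have hm4 : m = 2*u := by omega
      subst hm4
      have hpow : ((-1 : ℤ))^(2*u) = 1 := by
        rw [pow_mul]; norm_num
      rw [hpow]
      push_cast
      have key : ∀ z : ZMod 16, (2*(2*z)+1)^2 * (2*(2*z)+2)^2 - (2*(2*z))^2 * (2*(2*z)+1)^2 = 4 := by decide
      linear_combination key (u : ZMod 16)
    · have hm4 : m = 2*u+1 := by omega
      subst hm4
      have hpow : ((-1 : ℤ))^(2*u+1) = -1 := by
        rw [pow_succ, pow_mul]; norm_num
      rw [hpow]
      push_cast
      have key : ∀ z : ZMod 16, (2*(2*z+1)+1)^2 * (2*(2*z+1)+2)^2 - (2*(2*z+1))^2 * (2*(2*z+1)+1)^2 = -4 := by decide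
      linear_combination key (u : ZMod 16)
  have := (ZMod.intCast_eq_intCast_iff _ _ 16).mp main
  exact_mod_cast this
end

section
/- For every natural number n, the Apéry number satisfies A_n ≡ (-1)^n (mod 3). -/
namespace AperyAux

open Finset

/-- the Apéry summand, cast into `ZMod 3` -/
def f (n k : ℕ) : ZMod 3 := (n.choose k : ZMod 3)^2 * ((n+k).choose k : ZMod 3)^2

/-- the Apéry number in `ZMod 3` -/
def A3 (n : ℕ) : ZMod 3 := ∑ k ∈ range (n+1), f n k

lemma apery_cast (n : ℕ) : ((apery n : ℤ) : ZMod 3) = A3 n := by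
  unfold apery A3 f
  push_cast
  rfl

instance : Fact (Nat.Prime 3) := ⟨by norm_num⟩

lemma lucas3 (n k : ℕ) :
    (n.choose k : ZMod 3) = ((n % 3).choose (k % 3) : ZMod 3) * ((n / 3).choose (k / 3)) := by
  have h := @Choose.choose_modEq_choose_mod_mul_choose_div n k 3 _
  have h' := (ZMod.intCast_eq_intCast_iff _ _ _).mpr h
  push_cast at h'
  exact_mod_cast h'

lemma A3_eq_sum (n m : ℕ) (h : n < m) : A3 n = ∑ k ∈ range m, f n k := by
  unfold A3
  apply Finset.sum_subset (Finset.range_subset_range.mpr (show n + 1 ≤ m from h))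
  intro k hk hk'
  have hnk : n < k := by
    simp only [mem_range] at hk hk' ⊢
    omega
  simp [f, Nat.choose_eq_zero_of_lt hnk]

lemma sum_range_three {M : Type*} [AddCommMonoid M] (g : ℕ → M) :
    ∑ k ∈ range 3, g k = g 0 + g 1 + g 2 := by
  have h2 : ∑ k ∈ range 3, g k = ∑ k ∈ range 2, g k + g 2 := Finset.sum_range_succ g 2
  have h1 : ∑ k ∈ range 2, g k = ∑ k ∈ range 1, g k + g 1 := Finset.sum_range_succ g 1
  have h0 : ∑ k ∈ range 1, g k = ∑ k ∈ range 0, g k + g 0 := Finset.sum_range_succ g 0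
  rw [h2, h1, h0, Finset.sum_range_zero, zero_add]

lemma sum_range_mul_three (g : ℕ → ZMod 3) (q : ℕ) :
    ∑ k ∈ range (3*q), g k = ∑ j ∈ range q, (g (3*j) + g (3*j+1) + g (3*j+2)) := by
  induction q with
  | zero => simp
  | succ q ih =>
    rw [show 3*(q+1) = 3*q+1+1+1 by ring, Finset.sum_range_succ, Finset.sum_range_succ,
      Finset.sum_range_succ, ih, Finset.sum_range_succ]
    ring

lemma term_eq (q r j s : ℕ) (hr : r < 3) (hs : s < 3) :
    f (3*q+r) (3*j+s) = f q j * f r s := by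
  unfold f
  have h1 : (3*q+r) % 3 = r := by omega
  have h2 : (3*q+r) / 3 = q := by omega
  have h3 : (3*j+s) % 3 = s := by omega
  have h4 : (3*j+s) / 3 = j := by omega
  rcases le_or_gt 3 (r+s) with h | h
  · have h5 : (3*q+r + (3*j+s)) % 3 = r+s-3 := by omega
    have h6 : (3*q+r + (3*j+s)) / 3 = q+j+1 := by omega
    rw [lucas3 (3*q+r) (3*j+s), lucas3 (3*q+r + (3*j+s)) (3*j+s), h1, h2, h3, h4, h5, h6]
    have hz : (r+s-3).choose s = 0 := Nat.choose_eq_zero_of_lt (by omega)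
    have hz2 : ((r+s).choose s : ZMod 3) = 0 := by
      interval_cases r <;> interval_cases s <;> first | omega | decide
    rw [hz, hz2]
    push_cast
    ring
  · have h5 : (3*q+r + (3*j+s)) % 3 = r+s := by omega
    have h6 : (3*q+r + (3*j+s)) / 3 = q+j := by omega
    rw [lucas3 (3*q+r) (3*j+s), lucas3 (3*q+r + (3*j+s)) (3*j+s), h1, h2, h3, h4, h5, h6]
    ring

lemma step (q r : ℕ) (hr : r < 3) : A3 (3*q+r) = A3 q * A3 r := by
  have hA3r : A3 r = f r 0 + f r 1 + f r 2 := by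
    rw [A3_eq_sum r 3 hr, sum_range_three]
  rw [A3_eq_sum (3*q+r) (3*(q+1)) (by omega), sum_range_mul_three]
  have key : ∀ j ∈ range (q+1),
      f (3*q+r) (3*j) + f (3*q+r) (3*j+1) + f (3*q+r) (3*j+2) = f q j * A3 r := by
    intro j _
    have e0 : f (3*q+r) (3*j) = f q j * f r 0 := term_eq q r j 0 hr (by norm_num)
    have e1 : f (3*q+r) (3*j+1) = f q j * f r 1 := term_eq q r j 1 hr (by norm_num)
    have e2 : f (3*q+r) (3*j+2) = f q j * f r 2 := term_eq q r j 2 hr (by norm_num)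
    rw [e0, e1, e2, hA3r]
    ring
  rw [Finset.sum_congr rfl key, ← Finset.sum_mul]
  rfl

lemma A3_eq_neg_one_pow (n : ℕ) : A3 n = (-1)^n := by
  induction n using Nat.strong_induction_on with
  | _ n ih =>
    rcases lt_or_ge n 3 with h | h
    · interval_cases n <;> decide
    · rw [show n = 3*(n/3) + n%3 by omega, step _ _ (by omega),
        ih (n/3) (by omega), ih (n%3) (by omega), pow_add, pow_mul]
      norm_num

end AperyAux

theorem apery_mod_three (n : ℕ) : apery n ≡ (-1)^n [ZMOD 3] := by
  have h : ((apery n : ℤ) : ZMod 3) = (((-1)^n : ℤ) : ZMod 3) := by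
    rw [AperyAux.apery_cast]
    push_cast
    exact AperyAux.A3_eq_neg_one_pow n
  exact (ZMod.intCast_eq_intCast_iff _ _ _).mp h
end

section
/- For every natural number n, A_{2n} ≡ 1 (mod 8) and A_{2n+1} ≡ 5 (mod 8), where A_m is the m-th Apéry number. -/
/-- binary digit sum (popcount) -/
def sb (n : ℕ) : ℕ := (Nat.digits 2 n).sum

lemma sb_zero : sb 0 = 0 := by simp [sb]

lemma sb_rec (n : ℕ) : sb n = n % 2 + sb (n / 2) := by
  rcases Nat.eq_zero_or_pos n with h | h
  · simp [h, sb]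
  · rw [sb, Nat.digits_def' (by norm_num) h]; rfl

lemma sb_two_mul (n : ℕ) : sb (2 * n) = sb n := by
  rw [sb_rec (2*n), Nat.mul_mod_right, Nat.mul_div_cancel_left _ two_pos, Nat.zero_add]

lemma sb_two_mul_add_one (n : ℕ) : sb (2 * n + 1) = sb n + 1 := by
  rw [sb_rec (2*n+1)]
  have h1 : (2 * n + 1) % 2 = 1 := by omega
  have h2 : (2 * n + 1) / 2 = n := by omega
  rw [h1, h2]; omega

lemma sb_pos {n : ℕ} (h : 0 < n) : 0 < sb n := by
  induction n using Nat.strong_induction_on with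
  | _ n ih =>
    rw [sb_rec]
    rcases Nat.eq_zero_or_pos (n / 2) with h2 | h2
    · have : n % 2 = 1 := by omega
      omega
    · have := ih (n / 2) (by omega) h2
      omega

lemma sb_add_le_aux (n : ℕ) : ∀ x y, x + y = n → sb (x + y) ≤ sb x + sb y := by
  induction n using Nat.strong_induction_on with
  | _ n ih' =>
    intro x y hn
    have ih : ∀ m, m < n → ∀ x y, x + y = m → sb (x + y) ≤ sb x + sb y := fun m hm => ih' m hm
    subst hn
    rcases Nat.eq_zero_or_pos (x + y) with h0 | h0
    · have hx : x = 0 := by omega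
      have hy : y = 0 := by omega
      subst hx hy; simp [sb_zero]
    · obtain ⟨a, ha⟩ : ∃ a, x = 2 * a + x % 2 := ⟨x / 2, by omega⟩
      obtain ⟨b, hb⟩ : ∃ b, y = 2 * b + y % 2 := ⟨y / 2, by omega⟩
      have hx2 := Nat.mod_two_eq_zero_or_one x
      have hy2 := Nat.mod_two_eq_zero_or_one y
      rcases hx2 with hx | hx <;> rcases hy2 with hy | hy <;> rw [hx] at ha <;> rw [hy] at hb <;> subst ha hb
      · have h : 2*a + 0 + (2*b + 0) = 2*(a+b) := by ring
        rw [h, sb_two_mul]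
        calc sb (a+b) ≤ sb a + sb b := ih _ (by omega) a b rfl
        _ ≤ _ := by rw [show 2*a+0 = 2*a by ring, show 2*b+0 = 2*b by ring, sb_two_mul, sb_two_mul]
      · have h : 2*a + 0 + (2*b + 1) = 2*(a+b) + 1 := by ring
        rw [h, sb_two_mul_add_one, show 2*a+0 = 2*a by ring, sb_two_mul, sb_two_mul_add_one]
        have := ih (a+b) (by omega) a b rfl
        omega
      · have h : 2*a + 1 + (2*b + 0) = 2*(a+b) + 1 := by ring
        rw [h, sb_two_mul_add_one, show 2*b+0 = 2*b by ring, sb_two_mul, sb_two_mul_add_one]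
        have := ih (a+b) (by omega) a b rfl
        omega
      · have h : 2*a + 1 + (2*b + 1) = 2*(a+b+1) := by ring
        rw [h, sb_two_mul, sb_two_mul_add_one, sb_two_mul_add_one]
        have h1 : sb (a+b+1) ≤ sb (a+b) + sb 1 := ih _ (by omega) (a+b) 1 rfl
        have h2 : sb (a+b) ≤ sb a + sb b := ih _ (by omega) a b rfl
        have h3 : sb 1 = 1 := by simp [sb]
        omega

lemma sb_add_le (x y : ℕ) : sb (x + y) ≤ sb x + sb y := sb_add_le_aux (x+y) x y rfl

lemma sb_one : sb 1 = 1 := by simp [sb]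

/-- the carry condition: total 2-adic valuation of C(m,k)*C(m+k,k) equals 1 -/
def bcond (m k : ℕ) : Prop := 2 * sb k + sb (m - k) = sb (m + k) + 1

instance : ∀ m k, Decidable (bcond m k) := fun m k => by unfold bcond; infer_instance

lemma bcond_pow (i : ℕ) : ∀ m : ℕ, m.testBit i ≠ m.testBit (i+1) →
    2^i ≤ m ∧ bcond m (2^i) := by
  induction i with
  | zero =>
    intro m hb
    simp only [Nat.testBit_succ, Nat.testBit_zero] at hb
    have hb' : m % 2 ≠ (m/2) % 2 := by
      intro h; apply hb; rw [h]
    rcases Nat.mod_two_eq_zero_or_one m with hr | hr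
    · -- m even, m/2 odd
      have hq : (m/2) % 2 = 1 := by omega
      obtain ⟨c, hc⟩ : ∃ c, m = 4*c + 2 := ⟨m/4, by omega⟩
      subst hc
      constructor
      · omega
      · unfold bcond
        rw [pow_zero, sb_one, show 4*c+2-1 = 2*(2*c)+1 by omega, show 4*c+2+1 = 2*(2*c+1)+1 by omega,
          sb_two_mul_add_one, sb_two_mul_add_one, sb_two_mul, sb_two_mul_add_one]
        omega
    · -- m odd, m/2 even
      have hq : (m/2) % 2 = 0 := by omega
      obtain ⟨c, hc⟩ : ∃ c, m = 4*c + 1 := ⟨m/4, by omega⟩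
      subst hc
      refine ⟨by omega, ?_⟩
      unfold bcond
      rw [pow_zero, sb_one, show 4*c+1-1 = 2*(2*c) by omega, show 4*c+1+1 = 2*(2*c+1) by omega,
        sb_two_mul, sb_two_mul, sb_two_mul, sb_two_mul_add_one]
      omega
  | succ i ih =>
    intro m hb
    have hb' : (m/2).testBit i ≠ (m/2).testBit (i+1) := by
      simpa [Nat.testBit_succ] using hb
    obtain ⟨hle, hc⟩ := ih (m/2) hb'
    have hle2 : 2^(i+1) ≤ m := by
      have : 2 * 2^i ≤ 2 * (m/2) := by omega
      calc 2^(i+1) = 2*2^i := by ring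
      _ ≤ 2*(m/2) := this
      _ ≤ m := by omega
    refine ⟨hle2, ?_⟩
    unfold bcond at hc ⊢
    obtain ⟨a, r, hr, hm⟩ : ∃ a r, r < 2 ∧ m = 2*a + r := ⟨m/2, m%2, by omega, by omega⟩
    have ha : m / 2 = a := by omega
    rw [ha] at hc hle
    have h1 : m - 2^(i+1) = 2*(a - 2^i) + r := by
      have : 2^(i+1) = 2*2^i := by ring
      omega
    have h2 : m + 2^(i+1) = 2*(a + 2^i) + r := by
      have : 2^(i+1) = 2*2^i := by ring
      omega
    have h3 : sb (2^(i+1)) = sb (2^i) := by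
      rw [show (2:ℕ)^(i+1) = 2*2^i by ring, sb_two_mul]
    rw [h1, h2, h3]
    interval_cases r
    · rw [show 2*(a - 2^i) + 0 = 2*(a-2^i) by ring, show 2*(a + 2^i) + 0 = 2*(a+2^i) by ring,
        sb_two_mul, sb_two_mul]
      exact hc
    · rw [sb_two_mul_add_one, sb_two_mul_add_one]
      omega

lemma bcond_imp : ∀ m : ℕ, ∀ k, 1 ≤ k → k ≤ m → bcond m k →
    ∃ i, k = 2^i ∧ m.testBit i ≠ m.testBit (i+1) := by
  intro m
  induction m using Nat.strong_induction_on with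
  | _ m ih =>
    intro k hk1 hkm hc
    unfold bcond at hc
    obtain ⟨a, r, hr, hm⟩ : ∃ a r, r < 2 ∧ m = 2*a + r := ⟨m/2, m%2, by omega, by omega⟩
    obtain ⟨b, t, ht, hkk⟩ : ∃ b t, t < 2 ∧ k = 2*b + t := ⟨k/2, k%2, by omega, by omega⟩
    subst hm hkk
    rcases (show t = 0 ∨ t = 1 by omega) with ht0 | ht1
    · -- k even, k = 2b, b ≥ 1
      subst ht0
      have hb1 : 1 ≤ b := by omega
      have hba : b ≤ a := by omega
      have e1 : 2*a + r - (2*b + 0) = 2*(a-b) + r := by omega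
      have e2 : 2*a + r + (2*b + 0) = 2*(a+b) + r := by omega
      rw [e1, e2, show 2*b+0 = 2*b by omega, sb_two_mul] at hc
      have hc' : bcond a b := by
        unfold bcond
        interval_cases r
        · rw [show 2*(a-b)+0 = 2*(a-b) by omega, show 2*(a+b)+0 = 2*(a+b) by omega,
            sb_two_mul, sb_two_mul] at hc
          exact hc
        · rw [sb_two_mul_add_one, sb_two_mul_add_one] at hc
          omega
      obtain ⟨i, hbi, hbit⟩ := ih a (by omega) b hb1 hba hc'
      refine ⟨i+1, by omega, ?_⟩
      have d1 : (2*a+r).testBit (i+1) = a.testBit i := by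
        rw [Nat.testBit_succ]
        congr 1
        omega
      have d2 : (2*a+r).testBit (i+2) = a.testBit (i+1) := by
        rw [Nat.testBit_succ]
        congr 1
        omega
      rw [d1, d2]
      exact hbit
    · -- k odd, k = 2b+1
      subst ht1
      rcases (show r = 0 ∨ r = 1 by omega) with hr0 | hr1
      · -- m even : m = 2a, need b = 0, then a odd
        subst hr0
        have hba : b + 1 ≤ a := by omega
        have e1 : 2*a + 0 - (2*b+1) = 2*(a-b-1) + 1 := by omega
        have e2 : 2*a + 0 + (2*b+1) = 2*(a+b) + 1 := by omega
        rw [e1, e2, sb_two_mul_add_one, sb_two_mul_add_one, sb_two_mul_add_one] at hc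
        -- hc : 2*(sb b + 1) + (sb (a-b-1) + 1) = sb (a+b) + 1 + 1
        have hsub : sb (a+b) ≤ sb (a-b-1) + sb (2*b+1) := by
          have : (a-b-1) + (2*b+1) = a+b := by omega
          calc sb (a+b) = sb ((a-b-1) + (2*b+1)) := by rw [this]
          _ ≤ _ := sb_add_le _ _
        rw [sb_two_mul_add_one] at hsub
        have hb0 : b = 0 := by
          by_contra h
          have := sb_pos (show 0 < b by omega)
          omega
        subst hb0
        simp only [Nat.add_zero, Nat.sub_zero, Nat.mul_zero, Nat.zero_add] at hc
        rw [sb_zero] at hc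
        have heq : sb (a-1) + 1 = sb a := by omega
        -- a must be odd
        have haodd : a % 2 = 1 := by
          by_contra h
          have ha2 : a % 2 = 0 := by omega
          obtain ⟨c, hcc⟩ : ∃ c, a = 2*c := ⟨a/2, by omega⟩
          have hc1 : 1 ≤ c := by omega
          subst hcc
          rw [show 2*c - 1 = 2*(c-1)+1 by omega, sb_two_mul_add_one, sb_two_mul] at heq
          have : sb c ≤ sb (c-1) + sb 1 := by
            have : (c-1) + 1 = c := by omega
            calc sb c = sb ((c-1)+1) := by rw [this]
            _ ≤ _ := sb_add_le _ _
          rw [sb_one] at this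
          omega
        refine ⟨0, by omega, ?_⟩
        simp only [Nat.testBit_succ, Nat.testBit_zero]
        have h1 : (2*a+0) % 2 = 0 := by omega
        have h2 : (2*a+0)/2 % 2 = 1 := by omega
        rw [h1, h2]
        simp
      · -- m odd : m = 2a+1, need b = 0, then a even
        subst hr1
        have hba : b ≤ a := by omega
        have e1 : 2*a + 1 - (2*b+1) = 2*(a-b) := by omega
        have e2 : 2*a + 1 + (2*b+1) = 2*(a+b+1) := by omega
        rw [e1, e2, sb_two_mul, sb_two_mul, sb_two_mul_add_one] at hc
        -- hc : 2*(sb b + 1) + sb (a-b) = sb (a+b+1) + 1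
        have hsub : sb (a+b+1) ≤ sb (a-b) + sb (2*b+1) := by
          have : (a-b) + (2*b+1) = a+b+1 := by omega
          calc sb (a+b+1) = sb ((a-b) + (2*b+1)) := by rw [this]
          _ ≤ _ := sb_add_le _ _
        rw [sb_two_mul_add_one] at hsub
        have hb0 : b = 0 := by
          by_contra h
          have := sb_pos (show 0 < b by omega)
          omega
        subst hb0
        simp only [Nat.add_zero, Nat.sub_zero, Nat.mul_zero, Nat.zero_add] at hc
        rw [sb_zero] at hc
        have heq : sb (a+1) = sb a + 1 := by omega
        have haeven : a % 2 = 0 := by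
          by_contra h
          have ha2 : a % 2 = 1 := by omega
          obtain ⟨c, hcc⟩ : ∃ c, a = 2*c+1 := ⟨a/2, by omega⟩
          subst hcc
          rw [show 2*c+1+1 = 2*(c+1) by omega, sb_two_mul, sb_two_mul_add_one] at heq
          have : sb (c+1) ≤ sb c + sb 1 := sb_add_le _ _
          rw [sb_one] at this
          omega
        refine ⟨0, by omega, ?_⟩
        simp only [Nat.testBit_succ, Nat.testBit_zero]
        have h1 : (2*a+1) % 2 = 1 := by omega
        have h2 : (2*a+1)/2 % 2 = 0 := by omega
        rw [h1, h2]
        simp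

lemma odd_sq_zmod8 {u : ℕ} (hu : u % 2 = 1) : ((u : ZMod 8))^2 = 1 := by
  rw [← ZMod.natCast_mod u 8]
  have : u % 8 = 1 ∨ u % 8 = 3 ∨ u % 8 = 5 ∨ u % 8 = 7 := by omega
  rcases this with h | h | h | h <;> rw [h] <;> decide

lemma sq_cast_zmod8 (N : ℕ) (hN : N ≠ 0) :
    ((N : ZMod 8))^2 = if padicValNat 2 N = 0 then 1 else
      if padicValNat 2 N = 1 then 4 else 0 := by
  have hv : N.factorization 2 = padicValNat 2 N := Nat.factorization_def N Nat.prime_two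
  have hfac := Nat.ordProj_mul_ordCompl_eq_self N 2
  have hu : ¬ 2 ∣ N / 2 ^ N.factorization 2 := Nat.not_dvd_ordCompl Nat.prime_two hN
  set v := padicValNat 2 N with hvdef
  rw [hv] at hfac hu
  set u := N / 2 ^ v with hudef
  have husq : ((u : ZMod 8))^2 = 1 := odd_sq_zmod8 (by omega)
  have hN8 : ((N : ZMod 8))^2 = ((2:ZMod 8)^v)^2 * ((u:ZMod 8))^2 := by
    rw [← hfac]; push_cast; ring
  rw [hN8, husq, mul_one]
  match v with
  | 0 => simp
  | 1 => norm_num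
  | (w+2) =>
    have h0 : ((2:ZMod 8)^(w+2))^2 = (2:ZMod 8)^3 * 2^(2*w+1) := by ring
    have h1 : (2:ZMod 8)^3 = 0 := by decide
    rw [h0, h1, zero_mul]
    simp

lemma v2_total {m k : ℕ} (hk : k ≤ m) :
    (padicValNat 2 (m.choose k * (m+k).choose k) : ℤ)
      = 2 * (sb k : ℤ) + sb (m - k) - sb (m + k) := by
  haveI : Fact (Nat.Prime 2) := ⟨Nat.prime_two⟩
  have h1 : m.choose k ≠ 0 := (Nat.choose_pos hk).ne'
  have h2 : (m+k).choose k ≠ 0 := (Nat.choose_pos (Nat.le_add_left k m)).ne'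
  have hmul := padicValNat.mul (p := 2) h1 h2
  have e1 : padicValNat 2 (m.choose k) = sb k + sb (m-k) - sb m := by
    have h := sub_one_mul_padicValNat_choose_eq_sub_sum_digits (p := 2) hk
    simpa [sb] using h
  have e2 : padicValNat 2 ((m+k).choose k) = sb k + sb m - sb (m+k) := by
    have h := sub_one_mul_padicValNat_choose_eq_sub_sum_digits' (p := 2) (k := k) (n := m)
    simpa [sb] using h
  have hb1 : sb m ≤ sb k + sb (m - k) := by
    have h := sb_add_le k (m-k)
    rwa [show k + (m-k) = m by omega] at h
  have hb2 : sb (m + k) ≤ sb k + sb m := by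
    have h := sb_add_le k m
    rwa [show k + m = m + k by omega] at h
  rw [hmul]
  omega

lemma term_val {m k : ℕ} (hk : k ≤ m) :
    ((m.choose k : ZMod 8))^2 * (((m+k).choose k : ZMod 8))^2
      = if k = 0 then 1 else if bcond m k then 4 else 0 := by
  have h1 : m.choose k ≠ 0 := (Nat.choose_pos hk).ne'
  have h2 : (m+k).choose k ≠ 0 := (Nat.choose_pos (Nat.le_add_left k m)).ne'
  have hmul : ((m.choose k : ZMod 8))^2 * (((m+k).choose k : ZMod 8))^2
      = ((m.choose k * (m+k).choose k : ℕ) : ZMod 8)^2 := by push_cast; ring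
  rw [hmul, sq_cast_zmod8 _ (by positivity)]
  have hv := v2_total hk
  set v := padicValNat 2 (m.choose k * (m+k).choose k) with hvdef
  by_cases hk0 : k = 0
  · subst hk0
    have : v = 0 := by
      have : (v : ℤ) = 0 := by rw [hv]; simp [sb_zero]
      exact_mod_cast this
    simp [this]
  · -- k ≥ 1 : v ≠ 0
    have hsb : 0 < sb k := sb_pos (by omega)
    have hineq : sb (m + k) ≤ sb (m - k) + sb k := by
      have h := sb_add_le (m-k) (2*k)
      rw [show (m-k) + 2*k = m + k by omega, sb_two_mul] at h
      exact h
    have hvne : v ≠ 0 := by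
      intro h0
      rw [h0] at hv
      simp at hv
      omega
    have hv1 : v = 1 ↔ bcond m k := by
      unfold bcond
      constructor
      · intro h1'
        rw [h1'] at hv
        push_cast at hv
        omega
      · intro hbc
        have : (v:ℤ) = 1 := by rw [hv]; push_cast; omega
        exact_mod_cast this
    simp only [hk0, if_false]
    by_cases hb : bcond m k
    · rw [if_pos hb, if_neg hvne, if_pos (hv1.mpr hb)]
    · rw [if_neg hb, if_neg hvne, if_neg (fun h => hb (hv1.mp h))]

lemma parity_lemma : ∀ B m : ℕ, m < 2^B →
    ((Finset.range B).filter (fun i => m.testBit i ≠ m.testBit (i+1))).card % 2 = m % 2 := by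
  intro B
  induction B with
  | zero => intro m hm; interval_cases m; simp
  | succ B ih =>
    intro m hm
    rw [Finset.card_filter, Finset.sum_range_succ']
    have step : ∀ i, (if m.testBit (i+1) ≠ m.testBit (i+1+1) then 1 else 0)
        = (if (m/2).testBit i ≠ (m/2).testBit (i+1) then 1 else 0) := by
      intro i
      simp [Nat.testBit_succ]
    simp only [step]
    rw [← Finset.card_filter]
    have ihm := ih (m/2) (by omega)
    have hb0 : (if m.testBit 0 ≠ m.testBit (0+1) then 1 else 0)
        = (if m % 2 = (m/2) % 2 then 0 else 1) := by
      simp only [Nat.testBit_succ, Nat.testBit_zero]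
      rcases Nat.mod_two_eq_zero_or_one m with h | h <;>
        rcases Nat.mod_two_eq_zero_or_one (m/2) with h2 | h2 <;> simp [h, h2]
    rw [hb0]
    by_cases hif : m % 2 = (m/2) % 2
    · rw [if_pos hif]; omega
    · rw [if_neg hif]; omega

lemma card_bcond (m : ℕ) :
    ((Finset.range m).filter (fun k => bcond m (k+1))).card % 2 = m % 2 := by
  have himg : (Finset.range m).filter (fun k => bcond m (k+1))
      = ((Finset.range m).filter (fun i => m.testBit i ≠ m.testBit (i+1))).image
          (fun i => 2^i - 1) := by
    ext k
    simp only [Finset.mem_filter, Finset.mem_image, Finset.mem_range]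
    constructor
    · rintro ⟨hkm, hbc⟩
      obtain ⟨i, hki, hbit⟩ := bcond_imp m (k+1) (by omega) (by omega) hbc
      have h2i : 2^i ≤ m := by omega
      have him : i < m := by
        have := Nat.lt_two_pow_self (n := i)
        omega
      exact ⟨i, ⟨him, hbit⟩, by omega⟩
    · rintro ⟨i, ⟨him, hbit⟩, hk⟩
      obtain ⟨h2i, hbc⟩ := bcond_pow i m hbit
      have h1 : 1 ≤ 2^i := Nat.one_le_two_pow
      constructor
      · omega
      · rw [show k + 1 = 2^i by omega]
        exact hbc
  rw [himg, Finset.card_image_of_injOn, parity_lemma m m (Nat.lt_two_pow_self (n := m))]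
  intro a _ b _ hab
  have h1 : 1 ≤ 2^a := Nat.one_le_two_pow
  have h2 : 1 ≤ 2^b := Nat.one_le_two_pow
  simp only at hab
  have : (2:ℕ)^a = 2^b := by omega
  exact Nat.pow_right_injective (by norm_num) this

lemma apery_zmod8 (m : ℕ) : ((apery m : ℤ) : ZMod 8) = 1 + 4 * ((m % 2 : ℕ) : ZMod 8) := by
  have hcast : ((apery m : ℤ) : ZMod 8)
      = ∑ k ∈ Finset.range (m+1), ((m.choose k : ZMod 8))^2 * (((m+k).choose k : ZMod 8))^2 := by
    unfold apery
    push_cast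
    ring_nf
  rw [hcast]
  have hterm : ∀ k ∈ Finset.range (m+1),
      ((m.choose k : ZMod 8))^2 * (((m+k).choose k : ZMod 8))^2
        = if k = 0 then 1 else if bcond m k then 4 else 0 := by
    intro k hk
    rw [Finset.mem_range] at hk
    exact term_val (by omega)
  rw [Finset.sum_congr rfl hterm, Finset.sum_range_succ']
  have hpeel : ∀ k : ℕ, (if k+1 = 0 then (1:ZMod 8) else if bcond m (k+1) then 4 else 0)
      = if bcond m (k+1) then 4 else 0 := fun k => by simp
  rw [Finset.sum_congr rfl (fun k _ => hpeel k)]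
  rw [if_pos rfl]
  set c := ((Finset.range m).filter (fun k => bcond m (k+1))).card with hc
  have hsum : (∑ k ∈ Finset.range m, if bcond m (k+1) then (4:ZMod 8) else 0)
      = (c : ZMod 8) * 4 := by
    rw [← Finset.sum_filter, Finset.sum_const, nsmul_eq_mul]
  rw [hsum]
  have hpar : c % 2 = m % 2 := card_bcond m
  have h8 : (8 : ZMod 8) = 0 := by decide
  have hred : (c : ZMod 8) * 4 = ((c % 2 : ℕ) : ZMod 8) * 4 := by
    conv_lhs => rw [show c = 2*(c/2) + c % 2 by omega]
    push_cast
    linear_combination ((c/2 : ℕ) : ZMod 8) * h8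
  rw [hred, hpar]
  ring

theorem apery_mod_eight (n : ℕ) :
    apery (2*n) ≡ 1 [ZMOD 8] ∧ apery (2*n+1) ≡ 5 [ZMOD 8] := by
  constructor
  · apply (ZMod.intCast_eq_intCast_iff _ _ _).mp
    rw [apery_zmod8]
    simp [Nat.mul_mod_right]
  · apply (ZMod.intCast_eq_intCast_iff _ _ _).mp
    rw [apery_zmod8]
    have : (2*n+1) % 2 = 1 := by omega
    rw [this]
    decide
end

section
/- For every positive integer n, the identity (1/n) ∑_{k=0}^{n-1} (-1)^k (2k+1) A_k = (-1)^{n-1} ∑_{m=0}^{n-1} C(2m,m) ∑_{k=0}^{m} C(m,k) C(m+k,k) C(n-1,m+k) C(n+m+k,m+k) holds; equivalently, ∑_{k=0}^{n-1} (-1)^k (2k+1) A_k = (-1)^{n-1} n ∑_{m=0}^{n-1} C(2m,m) ∑_{k=0}^{m} C(m,k) C(m+k,k) C(n-1,m+k) C(n+m+k,m+k). -/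
open Finset

lemma vand_range (m n k : ℕ) :
    (m + n).choose k = ∑ t ∈ range (k+1), m.choose t * n.choose (k - t) := by
  rw [Nat.add_choose_eq, Finset.Nat.sum_antidiagonal_eq_sum_range_succ_mk]

lemma vand2 (c b t : ℕ) :
    ∑ s ∈ range (c+1), c.choose s * b.choose (t + s) = (c + b).choose (c + t) := by
  by_cases htb : b < t
  · rw [Nat.choose_eq_zero_of_lt (by omega)]
    apply Finset.sum_eq_zero
    intro s _
    rw [Nat.choose_eq_zero_of_lt (show b < t + s by omega), mul_zero]
  · push_neg at htb
    obtain ⟨d, hd⟩ : ∃ d, b = t + d := ⟨b - t, by omega⟩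
    subst hd
    have h1 : (c + (t + d)).choose (c + t) = (c + (t + d)).choose d := by
      have := Nat.choose_symm_of_eq_add (n := c + (t+d)) (a := c + t) (b := d) (by omega)
      exact this
    rw [h1]
    have h2 : (c + (t + d)).choose d = ∑ u ∈ range (d+1), c.choose u * (t+d).choose (d - u) := by
      have := vand_range c (t+d) d
      rw [← this]
    rw [h2]
    -- both sums equal the common extension to range (c+d+1)
    have key : ∀ (N : ℕ), c ≤ N → d ≤ N →
        ∑ s ∈ range (N+1), c.choose s * (t+d).choose (t + s)
          = ∑ s ∈ range (c+1), c.choose s * (t+d).choose (t + s) := by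
      intro N hc _
      symm
      apply Finset.sum_subset
      · intro x hx; simp only [mem_range] at *; omega
      · intro x _ hx; simp only [mem_range] at hx
        rw [Nat.choose_eq_zero_of_lt (by omega), zero_mul]
    have key2 : ∑ u ∈ range (d+1), c.choose u * (t+d).choose (d - u)
        = ∑ s ∈ range (c+d+1), c.choose s * (t+d).choose (t + s) := by
      rw [show ∑ u ∈ range (d+1), c.choose u * (t+d).choose (d - u)
          = ∑ u ∈ range (d+1), c.choose u * (t+d).choose (t + u) from ?_]
      · apply Finset.sum_subset
        · intro x hx; simp only [mem_range] at *; omega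
        · intro x _ hx; simp only [mem_range] at hx
          rw [Nat.choose_eq_zero_of_lt (show t + d < t + x by omega), mul_zero]
      · apply Finset.sum_congr rfl
        intro u hu; simp only [mem_range] at hu
        congr 1
        have : d - u = (t+d) - (t+u) := by omega
        rw [this, Nat.choose_symm (by omega)]
    rw [key2, ← key (c+d) (by omega) (by omega)]

lemma Qinner (c b t : ℕ) :
    ∑ i ∈ range (c+t+1), (c+t).choose i * (b.choose i * i.choose t)
      = (c+t).choose t * (c+b).choose (c+t) := by
  have h1 : ∑ i ∈ range (c+t+1), (c+t).choose i * (b.choose i * i.choose t)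
      = ∑ i ∈ Ico t (t+(c+1)), (c+t).choose i * (b.choose i * i.choose t) := by
    symm
    apply Finset.sum_subset
    · intro x hx; simp only [mem_Ico, mem_range] at *; omega
    · intro x hx hx2; simp only [mem_Ico, mem_range] at *
      rw [Nat.choose_eq_zero_of_lt (show x < t by omega), mul_zero, mul_zero]
  rw [h1, Finset.sum_Ico_eq_sum_range]
  simp only [Nat.add_sub_cancel_left]
  have h2 : ∀ s ∈ range (c+1),
      (c+t).choose (t+s) * (b.choose (t+s) * (t+s).choose t)
        = (c+t).choose t * (c.choose s * b.choose (t+s)) := by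
    intro s hs
    simp only [mem_range] at hs
    have := Nat.choose_mul (n := c+t) (k := t+s) (s := t) (by omega)
    have h3 : (c+t).choose (t+s) * (t+s).choose t = (c+t).choose t * c.choose s := by
      rw [this]; congr 2 <;> omega
    calc (c+t).choose (t+s) * (b.choose (t+s) * (t+s).choose t)
        = ((c+t).choose (t+s) * (t+s).choose t) * b.choose (t+s) := by ring
      _ = ((c+t).choose t * c.choose s) * b.choose (t+s) := by rw [h3]
      _ = (c+t).choose t * (c.choose s * b.choose (t+s)) := by ring
  rw [Finset.sum_congr rfl h2, ← Finset.mul_sum, vand2]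

lemma addsub (a y d : ℕ) :
    (a+y).choose (a+d) * (a+d).choose a = (a+y).choose a * y.choose d := by
  by_cases hdy : d ≤ y
  · have := Nat.choose_mul (n := a+y) (k := a+d) (s := a) (by omega)
    rw [this]
    congr 2 <;> omega
  · rw [Nat.choose_eq_zero_of_lt (show a + y < a + d by omega), zero_mul,
      Nat.choose_eq_zero_of_lt (show y < d by omega), mul_zero]

lemma lemQ (a b x : ℕ) :
    ∑ i ∈ range (a+1), a.choose i * (b.choose i * (x+i).choose (a+b))
      = x.choose a * x.choose b := by
  by_cases hax : x < a
  · rw [Nat.choose_eq_zero_of_lt hax, zero_mul]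
    apply Finset.sum_eq_zero
    intro i hi
    simp only [mem_range] at hi
    by_cases hbi : b < i
    · rw [Nat.choose_eq_zero_of_lt hbi, zero_mul, mul_zero]
    · rw [Nat.choose_eq_zero_of_lt (show x + i < a + b by omega), mul_zero, mul_zero]
  · push_neg at hax
    obtain ⟨y, hy⟩ : ∃ y, x = a + y := ⟨x - a, by omega⟩
    subst hy
    -- expand third factor by Vandermonde
    have h1 : ∀ i ∈ range (a+1),
        a.choose i * (b.choose i * (a + y + i).choose (a+b))
          = ∑ t ∈ range (a+b+1), a.choose i * (b.choose i * i.choose t) * (a+y).choose (a+b-t) := by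
      intro i _
      rw [show a + y + i = i + (a + y) by omega, vand_range i (a+y) (a+b), Finset.mul_sum,
        Finset.mul_sum]
      apply Finset.sum_congr rfl
      intro t _
      ring
    rw [Finset.sum_congr rfl h1, Finset.sum_comm]
    -- truncate t-range to a+1
    have h2 : ∑ t ∈ range (a+b+1), ∑ i ∈ range (a+1),
        a.choose i * (b.choose i * i.choose t) * (a+y).choose (a+b-t)
        = ∑ t ∈ range (a+1), ∑ i ∈ range (a+1),
        a.choose i * (b.choose i * i.choose t) * (a+y).choose (a+b-t) := by
      symm
      apply Finset.sum_subset
      · intro z hz; simp only [mem_range] at *; omega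
      · intro t _ ht; simp only [mem_range] at ht
        apply Finset.sum_eq_zero
        intro i hi; simp only [mem_range] at hi
        simp [Nat.choose_eq_zero_of_lt (show i < t by omega)]
    rw [h2]
    -- inner sum via Qinner
    have h3 : ∀ t ∈ range (a+1), ∑ i ∈ range (a+1),
        a.choose i * (b.choose i * i.choose t) * (a+y).choose (a+b-t)
        = a.choose t * ((a-t)+b).choose a * (a+y).choose (a+b-t) := by
      intro t ht; simp only [mem_range] at ht
      rw [← Finset.sum_mul]
      congr 1
      obtain ⟨c, hc⟩ : ∃ c, a = c + t := ⟨a - t, by omega⟩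
      subst hc
      rw [Qinner c b t]
      simp [Nat.add_sub_cancel]
    rw [Finset.sum_congr rfl h3]
    -- per-term subset-of-subset rewrite (valid for t ≤ b)
    have h5 : ∀ t, t ≤ a → t ≤ b →
        a.choose t * ((a-t)+b).choose a * (a+y).choose (a+b-t)
          = (a+y).choose a * (a.choose t * y.choose (b-t)) := by
      intro t hta htb
      have e1 : (a-t)+b = a+(b-t) := by omega
      have e2 : a+b-t = a+(b-t) := by omega
      rw [e1, e2]
      calc a.choose t * (a+(b-t)).choose a * (a+y).choose (a+(b-t))
          = ((a+y).choose (a+(b-t)) * (a+(b-t)).choose a) * a.choose t := by ring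
        _ = ((a+y).choose a * y.choose (b-t)) * a.choose t := by rw [addsub]
        _ = (a+y).choose a * (a.choose t * y.choose (b-t)) := by ring
    have hvand : (a+y).choose b = ∑ t ∈ range (b+1), a.choose t * y.choose (b-t) :=
      vand_range a y b
    rw [hvand, Finset.mul_sum]
    by_cases hab : a ≤ b
    · -- truncate RHS to range (a+1)
      have h6 : ∑ t ∈ range (b+1), (a+y).choose a * (a.choose t * y.choose (b-t))
          = ∑ t ∈ range (a+1), (a+y).choose a * (a.choose t * y.choose (b-t)) := by
        symm
        apply Finset.sum_subset
        · intro z hz; simp only [mem_range] at *; omega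
        · intro t _ ht; simp only [mem_range] at ht
          simp [Nat.choose_eq_zero_of_lt (show a < t by omega)]
      rw [h6]
      apply Finset.sum_congr rfl
      intro t ht; simp only [mem_range] at ht
      exact h5 t (by omega) (by omega)
    · -- truncate LHS to range (b+1)
      push_neg at hab
      have h7 : ∑ t ∈ range (a+1), a.choose t * ((a-t)+b).choose a * (a+y).choose (a+b-t)
          = ∑ t ∈ range (b+1), a.choose t * ((a-t)+b).choose a * (a+y).choose (a+b-t) := by
        symm
        apply Finset.sum_subset
        · intro z hz; simp only [mem_range] at *; omega
        · intro t _ ht; simp only [mem_range] at ht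
          rw [Nat.choose_eq_zero_of_lt (show (a-t)+b < a by omega), mul_zero, zero_mul]
      rw [h7]
      apply Finset.sum_congr rfl
      intro t ht; simp only [mem_range] at ht
      exact h5 t (by omega) (by omega)

lemma lemB {n k : ℕ} (hk : k ≤ n) :
    n.choose k * (n+k).choose k = (2*k).choose k * (n+k).choose (2*k) := by
  have := Nat.choose_mul (n := n+k) (k := 2*k) (s := k) (by omega)
  have e : (n+k) - k = n := by omega
  have e2 : 2*k - k = k := by omega
  rw [e, e2] at this
  calc n.choose k * (n+k).choose k = (n+k).choose k * n.choose k := by ring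
    _ = (n+k).choose (2*k) * (2*k).choose k := this.symm
    _ = (2*k).choose k * (n+k).choose (2*k) := by ring

def TT (j : ℕ) : ℕ :=
  ∑ m ∈ Finset.range (j+1), (2*m).choose m * (j.choose m * m.choose (j-m))

lemma strehl (n : ℕ) :
    ∑ k ∈ range (n+1), (n.choose k)^2 * ((n+k).choose k)^2
      = ∑ j ∈ range (n+1), n.choose j * (n+j).choose j * TT j := by
  set Φ : ℕ → ℕ → ℕ := fun k j =>
    (2*k).choose k * (k.choose (j-k) * (n.choose j * (j.choose k * (n+j).choose j))) with hΦ
  have step1 : ∀ k ∈ range (n+1),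
      (n.choose k)^2 * ((n+k).choose k)^2 = ∑ j ∈ range (2*n+1), Φ k j := by
    intro k hk; simp only [mem_range] at hk
    have hkn : k ≤ n := by omega
    -- first rewrite the square using lemB and lemQ
    have hq := lemQ k (n-k) (n+k)
    have e1 : k + (n-k) = n := by omega
    rw [e1] at hq
    have e2 : (n+k).choose (n-k) = (n+k).choose (2*k) := by
      exact Nat.choose_symm_of_eq_add (by omega)
    rw [e2] at hq
    have key : (n.choose k)^2 * ((n+k).choose k)^2
        = (2*k).choose k * n.choose k * ((n+k).choose k * (n+k).choose (2*k)) := by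
      have := lemB hkn
      calc (n.choose k)^2 * ((n+k).choose k)^2
          = (n.choose k * (n+k).choose k) * (n.choose k * (n+k).choose k) := by ring
        _ = (n.choose k * (n+k).choose k) * ((2*k).choose k * (n+k).choose (2*k)) := by rw [this]
        _ = (2*k).choose k * n.choose k * ((n+k).choose k * (n+k).choose (2*k)) := by ring
    rw [key, ← hq, Finset.mul_sum]
    -- now termwise in i, then reindex j = k + i
    have term : ∀ i ∈ range (k+1),
        (2*k).choose k * n.choose k * (k.choose i * ((n-k).choose i * (n+k+i).choose n))
          = Φ k (k+i) := by
      intro i hi; simp only [mem_range] at hi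
      have hsub := addsub k (n-k) i
      rw [e1] at hsub
      have e3 : (n+(k+i)).choose n = (n+(k+i)).choose (k+i) :=
        Nat.choose_symm_of_eq_add (by omega)
      simp only [hΦ]
      have e4 : k + i - k = i := by omega
      rw [e4]
      calc (2*k).choose k * n.choose k * (k.choose i * ((n-k).choose i * (n+k+i).choose n))
          = (2*k).choose k * (k.choose i * ((n.choose k * (n-k).choose i) * (n+k+i).choose n)) := by
            ring
        _ = (2*k).choose k * (k.choose i * ((n.choose (k+i) * (k+i).choose k) * (n+k+i).choose n)) := by
            rw [hsub]
        _ = (2*k).choose k * (k.choose i * (n.choose (k+i) * ((k+i).choose k * (n+(k+i)).choose (k+i)))) := by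
            rw [← e3]; ring_nf
    rw [Finset.sum_congr rfl term]
    -- reindex: ∑_{i∈range(k+1)} Φ k (k+i) = ∑_{j∈Ico k (k+(k+1))} Φ k j
    have reidx : ∑ i ∈ range (k+1), Φ k (k+i) = ∑ j ∈ Ico k (k+(k+1)), Φ k j := by
      rw [Finset.sum_Ico_eq_sum_range]
      simp only [Nat.add_sub_cancel_left]
    rw [reidx]
    apply Finset.sum_subset
    · intro z hz; simp only [mem_Ico, mem_range] at *; omega
    · intro j hj hj2
      simp only [mem_Ico, mem_range] at hj hj2
      simp only [hΦ]
      by_cases hjk : j < k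
      · rw [Nat.choose_eq_zero_of_lt (show j < k from hjk)]
        ring
      · have : k < j - k := by omega
        rw [Nat.choose_eq_zero_of_lt this]
        ring
  rw [Finset.sum_congr rfl step1, Finset.sum_comm]
  -- truncate j to range (n+1)
  have trunc : ∑ j ∈ range (2*n+1), ∑ k ∈ range (n+1), Φ k j
      = ∑ j ∈ range (n+1), ∑ k ∈ range (n+1), Φ k j := by
    symm
    apply Finset.sum_subset
    · intro z hz; simp only [mem_range] at *; omega
    · intro j _ hj; simp only [mem_range] at hj
      apply Finset.sum_eq_zero
      intro k _
      simp only [hΦ]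
      rw [Nat.choose_eq_zero_of_lt (show n < j by omega)]
      ring
  rw [trunc]
  apply Finset.sum_congr rfl
  intro j hj; simp only [mem_range] at hj
  have trunc2 : ∑ k ∈ range (n+1), Φ k j = ∑ k ∈ range (j+1), Φ k j := by
    symm
    apply Finset.sum_subset
    · intro z hz; simp only [mem_range] at *; omega
    · intro k _ hk; simp only [mem_range] at hk
      simp only [hΦ]
      rw [Nat.choose_eq_zero_of_lt (show j < k by omega)]
      ring
  rw [trunc2]
  simp only [hΦ, TT]
  rw [Finset.mul_sum]
  apply Finset.sum_congr rfl
  intro k _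
  ring

lemma fA1 (m j : ℕ) :
    ((m:ℤ)+2) * ((((m+2)+j).choose j : ℕ) : ℤ)
      = ((m:ℤ)+2+(j:ℤ)) * ((((m+1)+j).choose j : ℕ) : ℤ) := by
  have h : ((m+1)+j).succ * ((m+1)+j).choose (m+1) = ((m+1)+j).succ.choose (m+1).succ * (m+1).succ :=
    Nat.add_one_mul_choose_eq ((m+1)+j) (m+1)
  have e1 : ((m+1)+j).choose (m+1) = ((m+1)+j).choose j := Nat.choose_symm_add
  have e2 : ((m+1)+j).succ.choose (m+1).succ = ((m+2)+j).choose (m+2) := by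
    congr 1 <;> omega
  have e3 : ((m+2)+j).choose (m+2) = ((m+2)+j).choose j := Nat.choose_symm_add
  rw [e1, e2, e3] at h
  simp only [Nat.succ_eq_add_one] at h
  have h2 : (((m+1+j+1) * ((m+1)+j).choose j : ℕ) : ℤ)
      = ((((m+2)+j).choose j * (m+1+1) : ℕ) : ℤ) := by rw [h]
  push_cast at h2 ⊢
  linarith

lemma fA2 (m j : ℕ) :
    ((m:ℤ)+1) * ((m.choose j : ℕ) : ℤ) = (((m:ℤ)+1) - j) * (((m+1).choose j : ℕ) : ℤ) := by
  by_cases hj : j ≤ m + 1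
  · have h := Nat.choose_mul_succ_eq m j
    have h2 : ((m.choose j * (m+1) : ℕ) : ℤ) = (((m+1).choose j * (m+1-j) : ℕ) : ℤ) := by
      rw [h]
    push_cast [Nat.cast_sub hj] at h2
    linarith
  · rw [Nat.choose_eq_zero_of_lt (show m < j by omega),
      Nat.choose_eq_zero_of_lt (show m + 1 < j by omega)]
    simp

lemma lemA (j : ℕ) : ∀ n : ℕ, 0 < n →
    ∑ k ∈ range n, (-1:ℤ)^k * (2*(k:ℤ)+1) * ((k.choose j : ℤ) * ((k+j).choose j : ℤ))
      = (-1:ℤ)^(n-1) * (n:ℤ) * (((n-1).choose j : ℤ) * ((n+j).choose j : ℤ)) := by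
  intro n hn
  induction n, hn using Nat.le_induction with
  | base =>
    simp only [Finset.sum_range_one]
    cases j with
    | zero => simp
    | succ i => simp [Nat.choose_eq_zero_of_lt (show 0 < i + 1 by omega)]
  | succ n hn ih =>
    obtain ⟨m, rfl⟩ : ∃ m, n = m + 1 := ⟨n - 1, by omega⟩
    rw [Finset.sum_range_succ, ih]
    simp only [show m + 1 - 1 = m from rfl, show m + 1 + 1 - 1 = m + 1 from rfl]
    have h1 := fA2 m j
    have h2 := fA1 m j
    have e1 : m + 1 + j = (m+1) + j := rfl
    have e2 : m + 1 + 1 + j = (m+2) + j := by ring_nf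
    rw [e2]
    push_cast
    push_cast at h1 h2
    linear_combination ((-1:ℤ)^m * (((m+1)+j).choose j : ℤ)) * h1
      + ((-1:ℤ)^m * (((m+1).choose j : ℕ) : ℤ)) * h2

lemma step4 (n : ℕ) (hn : 0 < n) :
    ∑ m ∈ range n, (2*m).choose m *
      ∑ k ∈ range (m+1), m.choose k * (m+k).choose k * (n-1).choose (m+k) * (n+m+k).choose (m+k)
    = ∑ j ∈ range n, ((n-1).choose j * (n+j).choose j) * TT j := by
  set Ψ : ℕ → ℕ → ℕ := fun m j =>
    (2*m).choose m * (j.choose m * (m.choose (j-m) * ((n-1).choose j * (n+j).choose j)))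
    with hΨ
  have step1 : ∀ m ∈ range n, (2*m).choose m *
      ∑ k ∈ range (m+1), m.choose k * (m+k).choose k * (n-1).choose (m+k) * (n+m+k).choose (m+k)
      = ∑ j ∈ range (2*n+1), Ψ m j := by
    intro m hm; simp only [mem_range] at hm
    rw [Finset.mul_sum]
    have term : ∀ k ∈ range (m+1),
        (2*m).choose m * (m.choose k * (m+k).choose k * (n-1).choose (m+k) * (n+m+k).choose (m+k))
          = Ψ m (m+k) := by
      intro k hk; simp only [mem_range] at hk
      simp only [hΨ]
      have e1 : (m+k).choose m = (m+k).choose k := Nat.choose_symm_add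
      have e2 : m + k - m = k := by omega
      have e3 : n + (m+k) = n + m + k := by ring
      rw [e1, e2, e3]
      ring
    rw [Finset.sum_congr rfl term]
    have reidx : ∑ k ∈ range (m+1), Ψ m (m+k) = ∑ j ∈ Ico m (m+(m+1)), Ψ m j := by
      rw [Finset.sum_Ico_eq_sum_range]
      simp only [Nat.add_sub_cancel_left]
    rw [reidx]
    apply Finset.sum_subset
    · intro z hz; simp only [mem_Ico, mem_range] at *; omega
    · intro j hj hj2
      simp only [mem_Ico, mem_range] at hj hj2
      simp only [hΨ]
      by_cases hjm : j < m
      · rw [Nat.choose_eq_zero_of_lt (show j < m from hjm)]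
        ring
      · rw [Nat.choose_eq_zero_of_lt (show m < j - m by omega)]
        ring
  rw [Finset.sum_congr rfl step1, Finset.sum_comm]
  have trunc : ∑ j ∈ range (2*n+1), ∑ m ∈ range n, Ψ m j
      = ∑ j ∈ range n, ∑ m ∈ range n, Ψ m j := by
    symm
    apply Finset.sum_subset
    · intro z hz; simp only [mem_range] at *; omega
    · intro j _ hj; simp only [mem_range] at hj
      apply Finset.sum_eq_zero
      intro m _
      simp only [hΨ]
      rw [Nat.choose_eq_zero_of_lt (show n - 1 < j by omega)]
      ring
  rw [trunc]
  apply Finset.sum_congr rfl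
  intro j hj; simp only [mem_range] at hj
  have trunc2 : ∑ m ∈ range n, Ψ m j = ∑ m ∈ range (j+1), Ψ m j := by
    symm
    apply Finset.sum_subset
    · intro z hz; simp only [mem_range] at *; omega
    · intro m _ hm; simp only [mem_range] at hm
      simp only [hΨ]
      rw [Nat.choose_eq_zero_of_lt (show j < m by omega)]
      ring
  rw [trunc2]
  simp only [hΨ, TT]
  rw [Finset.mul_sum]
  apply Finset.sum_congr rfl
  intro m _
  ring

theorem guo_zeng_identity (n : ℕ) (hn : 0 < n) :
    ∑ k ∈ Finset.range n, (-1)^k * (2*(k : ℤ)+1) * apery k =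
      (-1)^(n-1) * (n : ℤ) * ∑ m ∈ Finset.range n, ((2*m).choose m : ℤ) *
        ∑ k ∈ Finset.range (m+1), (m.choose k : ℤ) * ((m+k).choose k : ℤ) *
          ((n-1).choose (m+k) : ℤ) * ((n+m+k).choose (m+k) : ℤ) := by
  have hap : ∀ k : ℕ, apery k
      = ∑ j ∈ Finset.range (k+1),
          ((k.choose j : ℤ) * ((k+j).choose j : ℤ)) * (TT j : ℤ) := by
    intro k
    have h1 : apery k
        = ((∑ j ∈ range (k+1), (k.choose j)^2 * ((k+j).choose j)^2 : ℕ) : ℤ) := by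
      unfold apery; push_cast; rfl
    rw [h1, strehl k]
    push_cast
    apply Finset.sum_congr rfl
    intro j _
    ring
  have lhs_eq : ∑ k ∈ Finset.range n, (-1:ℤ)^k * (2*(k : ℤ)+1) * apery k
      = ∑ j ∈ range n, (TT j : ℤ) *
          ((-1:ℤ)^(n-1) * (n:ℤ) * (((n-1).choose j : ℤ) * ((n+j).choose j : ℤ))) := by
    have h2 : ∀ k ∈ range n, (-1:ℤ)^k * (2*(k : ℤ)+1) * apery k
        = ∑ j ∈ range n,
            (-1:ℤ)^k * (2*(k:ℤ)+1) * ((k.choose j : ℤ) * ((k+j).choose j : ℤ)) * (TT j : ℤ) := by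
      intro k hk; simp only [mem_range] at hk
      rw [hap k, Finset.mul_sum]
      have ext : ∑ j ∈ range (k+1),
          (-1:ℤ)^k * (2*(k:ℤ)+1) * (((k.choose j : ℤ) * ((k+j).choose j : ℤ)) * (TT j : ℤ))
          = ∑ j ∈ range n,
          (-1:ℤ)^k * (2*(k:ℤ)+1) * (((k.choose j : ℤ) * ((k+j).choose j : ℤ)) * (TT j : ℤ)) := by
        apply Finset.sum_subset
        · intro z hz; simp only [mem_range] at *; omega
        · intro j hj hj2; simp only [mem_range] at hj hj2
          rw [Nat.choose_eq_zero_of_lt (show k < j by omega)]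
          push_cast
          ring
      rw [ext]
      apply Finset.sum_congr rfl
      intro j _
      ring
    rw [Finset.sum_congr rfl h2, Finset.sum_comm]
    apply Finset.sum_congr rfl
    intro j _
    rw [← lemA j n hn, Finset.mul_sum]
    apply Finset.sum_congr rfl
    intro k _
    ring
  rw [lhs_eq]
  have rhs_cast : ∑ m ∈ Finset.range n, ((2*m).choose m : ℤ) *
        ∑ k ∈ Finset.range (m+1), (m.choose k : ℤ) * ((m+k).choose k : ℤ) *
          ((n-1).choose (m+k) : ℤ) * ((n+m+k).choose (m+k) : ℤ)
      = ((∑ m ∈ range n, (2*m).choose m *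
          ∑ k ∈ range (m+1), m.choose k * (m+k).choose k * (n-1).choose (m+k)
            * (n+m+k).choose (m+k) : ℕ) : ℤ) := by
    push_cast
    rfl
  rw [rhs_cast, step4 n hn]
  push_cast
  rw [Finset.mul_sum]
  apply Finset.sum_congr rfl
  intro j _
  ring
end
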